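/- arXiv:2404.12155 — 8 statements merged into one kernel-verified Lean document; each statement's English description precedes it below -/
import Mathlib

section
/- Let M, L ∈ ℝ^{2n×2n} form a symplectic matrix pencil, i.e. M J Mᵀ = L J Lᵀ where J = [[0, Iₙ],[-Iₙ, 0]]. Suppose M⋆, L⋆ ∈ ℝ^{2n×2n} satisfy rank[M⋆, L⋆] = 2n and M⋆ L = L⋆ M, and set M̂ = M⋆ M, L̂ = L⋆ L (a doubling transformation of M − λL). Then M̂ − λL̂ is also a symplectic matrix pencil, i.e. M̂ J M̂ᵀ = L̂ J L̂ᵀ. -/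
open Matrix

section

variable {l m n R : Type*} [Fintype m] [Fintype n] [CommSemiring R]

theorem mul_mul_mul_transpose_mul (C : Matrix l m R) (A : Matrix m n R) (X : Matrix n n R) :
    C * A * X * (C * A)ᵀ = C * (A * X * Aᵀ) * Cᵀ := by
  simp only [transpose_mul, Matrix.mul_assoc]

theorem mul_mul_transpose_eq_of_mul_eq_mul {A B : Matrix m n R} {C D : Matrix l m R}
    {X : Matrix n n R} (h : A * X * Aᵀ = B * X * Bᵀ) (hCD : C * B = D * A) :
    C * A * X * (C * A)ᵀ = D * B * X * (D * B)ᵀ :=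
  calc C * A * X * (C * A)ᵀ
      = C * (B * X * Bᵀ) * Cᵀ := by rw [mul_mul_mul_transpose_mul, h]
    _ = D * A * X * (D * A)ᵀ := by rw [← mul_mul_mul_transpose_mul, hCD]
    _ = D * B * X * (D * B)ᵀ := by rw [mul_mul_mul_transpose_mul, h, ← mul_mul_mul_transpose_mul]

end

theorem stmt_0_general (n : ℕ)
    (M L Mst Lst J : Matrix (Fin n ⊕ Fin n) (Fin n ⊕ Fin n) ℝ)
    (hsymp : M * J * Mᵀ = L * J * Lᵀ)
    (hswap : Mst * L = Lst * M) :
    (Mst * M) * J * (Mst * M)ᵀ = (Lst * L) * J * (Lst * L)ᵀ :=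
  mul_mul_transpose_eq_of_mul_eq_mul hsymp hswap

theorem stmt_0 (n : ℕ)
    (M L Mst Lst J : Matrix (Fin n ⊕ Fin n) (Fin n ⊕ Fin n) ℝ)
    (hJ : J = fromBlocks 0 1 (-1) 0)
    (hsymp : M * J * Mᵀ = L * J * Lᵀ)
    (hrank : (fromCols Mst Lst).rank = 2 * n)
    (hswap : Mst * L = Lst * M) :
    (Mst * M) * J * (Mst * M)ᵀ = (Lst * L) * J * (Lst * L)ᵀ :=
  stmt_0_general n M L Mst Lst J hsymp hswap
end

section
/- Let M, L ∈ ℝ^{2n×2n} form a symplectic matrix pencil and let M̂ = M⋆ M, L̂ = L⋆ L be a doubling transformation of M − λL. If U, V ∈ ℝ^{n×m} and S ∈ ℝ^{m×m} satisfy M·[U; V] = L·[U; V]·S (block column [U; V] ∈ ℝ^{2n×m}), then M̂·[U; V] = L̂·[U; V]·S². -/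
open Matrix

theorem Matrix.doubling_mul_eq_of_mul_eq {R ι κ ρ σ : Type*} [Semiring R]
    [Fintype ι] [Fintype κ] [DecidableEq κ] [Fintype ρ]
    {M L : Matrix ρ ι R} {Mst Lst : Matrix σ ρ R} (hswap : Mst * L = Lst * M)
    {X : Matrix ι κ R} {S : Matrix κ κ R} (h : M * X = L * (X * S)) :
    (Mst * M) * X = (Lst * L) * (X * S ^ 2) :=
  calc (Mst * M) * X = (Mst * L) * (X * S) := by rw [Matrix.mul_assoc, h, Matrix.mul_assoc]
    _ = Lst * (M * X) * S := by rw [hswap, Matrix.mul_assoc, Matrix.mul_assoc, Matrix.mul_assoc]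
    _ = (Lst * L) * (X * S ^ 2) := by rw [h, sq]; simp only [Matrix.mul_assoc]

theorem stmt_1_general (n m : ℕ)
    (M L Mst Lst : Matrix (Fin n ⊕ Fin n) (Fin n ⊕ Fin n) ℝ)
    (hswap : Mst * L = Lst * M)
    (U V : Matrix (Fin n) (Fin m) ℝ) (S : Matrix (Fin m) (Fin m) ℝ)
    (h : M * fromRows U V = L * (fromRows U V * S)) :
    (Mst * M) * fromRows U V = (Lst * L) * (fromRows U V * S ^ 2) :=
  Matrix.doubling_mul_eq_of_mul_eq hswap h

theorem stmt_1 (n m : ℕ)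
    (M L Mst Lst J : Matrix (Fin n ⊕ Fin n) (Fin n ⊕ Fin n) ℝ)
    (hJ : J = fromBlocks 0 1 (-1) 0)
    (hsymp : M * J * Mᵀ = L * J * Lᵀ)
    (hrank : (fromCols Mst Lst).rank = 2 * n)
    (hswap : Mst * L = Lst * M)
    (U V : Matrix (Fin n) (Fin m) ℝ) (S : Matrix (Fin m) (Fin m) ℝ)
    (h : M * fromRows U V = L * (fromRows U V * S)) :
    (Mst * M) * fromRows U V = (Lst * L) * (fromRows U V * S ^ 2) :=
  stmt_1_general n m M L Mst Lst hswap U V S h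
end

section
/- Let M, L ∈ ℝ^{2n×2n} form a symplectic matrix pencil and let M̂ = M⋆ M, L̂ = L⋆ L be a doubling transformation of M − λL. Suppose there exist nonsingular W, Z ∈ ℝ^{2n×2n}, a matrix J_r ∈ ℝ^{r×r}, and a nilpotent matrix N_{2n−r} ∈ ℝ^{(2n−r)×(2n−r)} such that W M Z = diag(J_r, I_{2n−r}) and W L Z = diag(I_r, N_{2n−r}). Then there exists a nonsingular matrix Ŵ ∈ ℝ^{2n×2n} such that Ŵ M̂ Z = diag(J_r², I_{2n−r}) and Ŵ L̂ Z = diag(I_r, N_{2n−r}²). -/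
/-!
In Weierstrass coordinates `A = diag(C, 1)`, `B = diag(1, D)` the doubling relation
`M⋆ L = L⋆ M` becomes `P B = Q A` for `P = M⋆ W⁻¹`, `Q = L⋆ W⁻¹`; blockwise this says
`P₁ = Q₁ C` and `P₂ D = Q₂`. The matrix `Y = [Q₁ P₂]` then satisfies `Y A² = P A` and
`Y B² = Q B`, and every left null vector of `Y` is a common left null vector of `P` and `Q`,
hence zero since `[M⋆ L⋆]` has full row rank. So `Ŵ = Y⁻¹` works.
-/

open Matrix

namespace Matrix

section BlockPencil

variable {R : Type*} [Ring R] {m m₁ m₂ : Type*} [Fintype m₁] [Fintype m₂]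
  {P Q : Matrix m (m₁ ⊕ m₂) R} {C : Matrix m₁ m₁ R} {D : Matrix m₂ m₂ R}

theorem vecMul_eq_zero_of_vecMul_fromCols_toCols_eq_zero [Fintype m]
    (hP : P.toCols₁ = Q.toCols₁ * C) (hQ : P.toCols₂ * D = Q.toCols₂) {u : m → R}
    (hu : u ᵥ* fromCols Q.toCols₁ P.toCols₂ = 0) : u ᵥ* P = 0 ∧ u ᵥ* Q = 0 := by
  have hQ₁ : u ᵥ* Q.toCols₁ = 0 := funext fun i => congrFun hu (Sum.inl i)
  have hP₂ : u ᵥ* P.toCols₂ = 0 := funext fun j => congrFun hu (Sum.inr j)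
  rw [← fromCols_toCols P, ← fromCols_toCols Q, vecMul_fromCols, vecMul_fromCols, hP, ← hQ,
    ← vecMul_vecMul, ← vecMul_vecMul, hQ₁, hP₂, zero_vecMul, zero_vecMul,
    Sum.elim_zero_zero]
  exact ⟨rfl, rfl⟩

variable [DecidableEq m₁] [DecidableEq m₂]

theorem toCols_eq_of_mul_fromBlocks_eq
    (h : P * fromBlocks (1 : Matrix m₁ m₁ R) 0 0 D =
      Q * fromBlocks C 0 0 (1 : Matrix m₂ m₂ R)) :
    P.toCols₁ = Q.toCols₁ * C ∧ P.toCols₂ * D = Q.toCols₂ := by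
  rw [← fromCols_toCols P, ← fromCols_toCols Q, fromCols_mul_fromBlocks,
    fromCols_mul_fromBlocks, fromCols_ext_iff] at h
  simpa using h

theorem fromCols_toCols_mul_fromBlocks_sq_left
    (hP : P.toCols₁ = Q.toCols₁ * C) :
    fromCols Q.toCols₁ P.toCols₂ * fromBlocks (C ^ 2) 0 0 (1 : Matrix m₂ m₂ R) =
      P * fromBlocks C 0 0 (1 : Matrix m₂ m₂ R) := by
  conv_rhs => rw [← fromCols_toCols P]
  simp [fromCols_mul_fromBlocks, hP, sq, Matrix.mul_assoc]

theorem fromCols_toCols_mul_fromBlocks_sq_right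
    (hQ : P.toCols₂ * D = Q.toCols₂) :
    fromCols Q.toCols₁ P.toCols₂ * fromBlocks (1 : Matrix m₁ m₁ R) 0 0 (D ^ 2) =
      Q * fromBlocks (1 : Matrix m₁ m₁ R) 0 0 D := by
  conv_rhs => rw [← fromCols_toCols Q]
  simp [fromCols_mul_fromBlocks, ← hQ, sq, Matrix.mul_assoc]

end BlockPencil

theorem eq_zero_of_vecMul_eq_zero_of_rank_eq_card {K m n : Type*} [Field K] [Fintype m]
    [Fintype n] {A : Matrix m n K} (hA : A.rank = Fintype.card m) {u : m → K}
    (hu : u ᵥ* A = 0) : u = 0 := by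
  have hrows : LinearIndependent K A.row := linearIndependent_iff_card_eq_finrank_span.2
    (by rw [Set.finrank, ← rank_eq_finrank_span_row, hA])
  exact vecMul_injective_iff.2 hrows (hu.trans (zero_vecMul A).symm)

theorem vecMul_submatrix_id {R m n n' : Type*} [NonUnitalNonAssocSemiring R] [Fintype m]
    (u : m → R) (A : Matrix m n R) (f : n' → n) : u ᵥ* A.submatrix id f = (u ᵥ* A) ∘ f :=
  rfl

theorem isUnit_submatrix_id_of_vecMul_eq_zero {K ι κ : Type*} [Field K] [Fintype ι]
    [DecidableEq ι] {Y : Matrix ι κ K} (e : ι ≃ κ) (hY : ∀ u, u ᵥ* Y = 0 → u = 0) :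
    IsUnit (Y.submatrix id e) := by
  rw [isUnit_iff_isUnit_det, isUnit_iff_ne_zero, Ne, ← exists_vecMul_eq_zero_iff]
  rintro ⟨u, hu₀, hu⟩
  refine hu₀ (hY u (funext fun k => ?_))
  have hk := congrFun hu (e.symm k)
  rwa [vecMul_submatrix_id, Function.comp_apply, e.apply_symm_apply] at hk

theorem mul_mul_eq_submatrix_of_mul_mul_eq {K ι κ : Type*} [Field K] [Fintype ι]
    [DecidableEq ι] [Fintype κ] {W T Z : Matrix ι ι K} (hW : IsUnit W.det) {A : Matrix κ κ K}
    (e : ι ≃ κ) (hT : W * T * Z = A.submatrix e e) (S : Matrix ι ι K) :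
    S * T * Z = ((S * W⁻¹).submatrix id e.symm * A).submatrix id e := by
  rw [← submatrix_mul_equiv _ _ _ e, ← hT, submatrix_submatrix, e.symm_comp_self,
    Function.comp_id, submatrix_id_id]
  simp only [Matrix.mul_assoc, nonsing_inv_mul_cancel_left W _ hW]

theorem exists_isUnit_mul_doubling_eq_fromBlocks_sq {K ι m₁ m₂ : Type*} [Field K] [Fintype ι]
    [DecidableEq ι] [Fintype m₁] [Fintype m₂] [DecidableEq m₁] [DecidableEq m₂]
    {M L Mst Lst W Z : Matrix ι ι K} (e : ι ≃ m₁ ⊕ m₂)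
    (hker : ∀ u, u ᵥ* Mst = 0 → u ᵥ* Lst = 0 → u = 0) (hswap : Mst * L = Lst * M)
    (hW : IsUnit W) {C : Matrix m₁ m₁ K} {D : Matrix m₂ m₂ K}
    (hM : W * M * Z = (fromBlocks C 0 0 1).submatrix e e)
    (hL : W * L * Z = (fromBlocks 1 0 0 D).submatrix e e) :
    ∃ X : Matrix ι ι K, IsUnit X ∧
      X * (Mst * M) * Z = (fromBlocks (C ^ 2) 0 0 1).submatrix e e ∧
      X * (Lst * L) * Z = (fromBlocks 1 0 0 (D ^ 2)).submatrix e e := by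
  have hWdet := (isUnit_iff_isUnit_det W).1 hW
  set P := (Mst * W⁻¹).submatrix id e.symm
  set Q := (Lst * W⁻¹).submatrix id e.symm
  have hPQ : P * fromBlocks (1 : Matrix m₁ m₁ K) 0 0 D =
      Q * fromBlocks C 0 0 (1 : Matrix m₂ m₂ K) := by
    have h := (mul_mul_eq_submatrix_of_mul_mul_eq hWdet e hL Mst).symm.trans
      (hswap ▸ mul_mul_eq_submatrix_of_mul_mul_eq hWdet e hM Lst)
    simpa using congrArg (submatrix · id e.symm) h
  obtain ⟨hP, hQ⟩ := toCols_eq_of_mul_fromBlocks_eq hPQ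
  have hvecMul : ∀ (S : Matrix ι ι K) (u : ι → K),
      u ᵥ* (S * W⁻¹).submatrix id e.symm = 0 → u ᵥ* S = 0 := by
    intro S u hu
    have hSW : u ᵥ* (S * W⁻¹) = 0 := funext fun i => by
      simpa [vecMul_submatrix_id] using congrFun hu (e i)
    rw [← nonsing_inv_mul_cancel_right W S hWdet, ← vecMul_vecMul, hSW, zero_vecMul]
  set Y := fromCols Q.toCols₁ P.toCols₂
  have hY : IsUnit (Y.submatrix id e) := isUnit_submatrix_id_of_vecMul_eq_zero e fun u hu =>
    have h := vecMul_eq_zero_of_vecMul_fromCols_toCols_eq_zero hP hQ hu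
    hker u (hvecMul Mst u h.1) (hvecMul Lst u h.2)
  have hYdet := (isUnit_iff_isUnit_det _).1 hY
  refine ⟨(Y.submatrix id e)⁻¹, isUnit_nonsing_inv_iff.2 hY, ?_, ?_⟩
  · rw [Matrix.mul_assoc, mul_mul_eq_submatrix_of_mul_mul_eq hWdet e hM,
      ← fromCols_toCols_mul_fromBlocks_sq_left hP, ← submatrix_mul_equiv _ _ _ e,
      nonsing_inv_mul_cancel_left _ _ hYdet]
  · rw [Matrix.mul_assoc, mul_mul_eq_submatrix_of_mul_mul_eq hWdet e hL,
      ← fromCols_toCols_mul_fromBlocks_sq_right hQ, ← submatrix_mul_equiv _ _ _ e,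
      nonsing_inv_mul_cancel_left _ _ hYdet]

end Matrix

theorem stmt_2_general (n r s : ℕ)
    (M L Mst Lst : Matrix (Fin n ⊕ Fin n) (Fin n ⊕ Fin n) ℝ)
    (hrank : (fromCols Mst Lst).rank = 2 * n)
    (hswap : Mst * L = Lst * M)
    (W Z : Matrix (Fin n ⊕ Fin n) (Fin n ⊕ Fin n) ℝ)
    (hW : IsUnit W)
    (e : (Fin n ⊕ Fin n) ≃ (Fin r ⊕ Fin s))
    (Jr : Matrix (Fin r) (Fin r) ℝ) (N : Matrix (Fin s) (Fin s) ℝ)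
    (hM : W * M * Z = (fromBlocks Jr 0 0 1).submatrix e e)
    (hL : W * L * Z = (fromBlocks 1 0 0 N).submatrix e e) :
    ∃ What : Matrix (Fin n ⊕ Fin n) (Fin n ⊕ Fin n) ℝ, IsUnit What ∧
      What * (Mst * M) * Z = (fromBlocks (Jr ^ 2) 0 0 1).submatrix e e ∧
      What * (Lst * L) * Z = (fromBlocks 1 0 0 (N ^ 2)).submatrix e e := by
  refine exists_isUnit_mul_doubling_eq_fromBlocks_sq e (fun u hMst hLst => ?_) hswap hW hM hL
  refine eq_zero_of_vecMul_eq_zero_of_rank_eq_card (by simpa [two_mul] using hrank) ?_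
  rw [vecMul_fromCols, hMst, hLst, Sum.elim_zero_zero]

theorem stmt_2 (n r s : ℕ) (hrs : r + s = 2 * n)
    (M L Mst Lst J : Matrix (Fin n ⊕ Fin n) (Fin n ⊕ Fin n) ℝ)
    (hJ : J = fromBlocks 0 1 (-1) 0)
    (hsymp : M * J * Mᵀ = L * J * Lᵀ)
    (hrank : (fromCols Mst Lst).rank = 2 * n)
    (hswap : Mst * L = Lst * M)
    (W Z : Matrix (Fin n ⊕ Fin n) (Fin n ⊕ Fin n) ℝ)
    (hW : IsUnit W) (hZ : IsUnit Z)
    (e : (Fin n ⊕ Fin n) ≃ (Fin r ⊕ Fin s))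
    (Jr : Matrix (Fin r) (Fin r) ℝ) (N : Matrix (Fin s) (Fin s) ℝ)
    (hN : IsNilpotent N)
    (hM : W * M * Z = (fromBlocks Jr 0 0 1).submatrix e e)
    (hL : W * L * Z = (fromBlocks 1 0 0 N).submatrix e e) :
    ∃ What : Matrix (Fin n ⊕ Fin n) (Fin n ⊕ Fin n) ℝ, IsUnit What ∧
      What * (Mst * M) * Z = (fromBlocks (Jr ^ 2) 0 0 1).submatrix e e ∧
      What * (Lst * L) * Z = (fromBlocks 1 0 0 (N ^ 2)).submatrix e e :=
  stmt_2_general n r s M L Mst Lst hrank hswap W Z hW e Jr N hM hL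
end

section
/- Under the ADDA setup, for every k ≥ 0 the iterates X_k satisfy, in the Loewner order: 0 ≤ X_k ≤ X_{k+1} ≤ X, and moreover 0 ≤ X − X_k ≤ (I + X Y)·𝒞(S;α)^{2^k}·X·𝒞(R;α)^{2^k}. -/
/-!
With `E = 𝒞(R;α)` and `F = 𝒞(S;α)` the iterates satisfy the doubling invariant
`Âₖ = (I + Yₖ X) E^{2^k}`, `X - Xₖ = Âₖᵀ X E^{2^k}`, together with its dual
`Âₖᵀ = (I + Xₖ Y) F^{2^k}`, `Y - Yₖ = Âₖ Y F^{2^k}`. At `k = 0` this is the CARE (resp. its dual)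
rewritten through the Cayley transform; a doubling step squares `E` and `F` by the push-through
identity `B (I + A B)⁻¹ = (I + B A)⁻¹ B`. Eliminating `Âₖ` gives
`X - Xₖ = (E^{2^k})ᵀ (X + X Yₖ X) E^{2^k} ≥ 0`, and since `Rᵀ (I + X Y) = (I + X Y) S` intertwines
the Cayley transforms, the claimed bound exceeds `X - Xₖ` by `(E^{2^k})ᵀ X (Y - Yₖ) X E^{2^k} ≥ 0`.
Monotonicity and `Xₖ, Yₖ ≥ 0` come from `P (I + N P)⁻¹ ≥ 0` for `P, N ≥ 0`.
-/

open Matrix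

namespace Matrix

section CommRing

variable {K : Type*} [CommRing K] {n : Type*} [Fintype n] [DecidableEq n]

lemma nonsing_inv_mul_of_isUnit {A : Matrix n n K} (h : IsUnit A) : A⁻¹ * A = 1 :=
  nonsing_inv_mul A ((isUnit_iff_isUnit_det A).1 h)

lemma mul_nonsing_inv_of_isUnit {A : Matrix n n K} (h : IsUnit A) : A * A⁻¹ = 1 :=
  mul_nonsing_inv A ((isUnit_iff_isUnit_det A).1 h)

lemma isUnit_one_add_mul_comm {A B : Matrix n n K} (h : IsUnit (1 + A * B)) :
    IsUnit (1 + B * A) := by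
  rwa [isUnit_iff_isUnit_det, ← det_one_add_mul_comm, ← isUnit_iff_isUnit_det]

lemma mul_inv_one_add_mul_comm {A B : Matrix n n K} (h : IsUnit (1 + A * B)) :
    B * (1 + A * B)⁻¹ = (1 + B * A)⁻¹ * B := by
  have hl := nonsing_inv_mul_of_isUnit (isUnit_one_add_mul_comm h)
  have hr := mul_nonsing_inv_of_isUnit h
  linear_combination (norm := noncomm_ring)
    -(hl * (B * (1 + A * B)⁻¹)) + ((1 + B * A)⁻¹ * B) * hr

noncomputable def cayley (α : K) (M : Matrix n n K) : Matrix n n K :=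
  (M + α • 1) * (M - α • 1)⁻¹

lemma eq_mul_cayley {α : K} {M T Z : Matrix n n K} (hM : IsUnit (M - α • 1))
    (h : Z * (M - α • 1) = T * (M + α • 1)) : Z = T * cayley α M := by
  have hr := mul_nonsing_inv_of_isUnit hM
  rw [cayley]
  linear_combination (norm := noncomm_ring) -(Z * hr) + h * (M - α • 1)⁻¹

lemma isUnit_transpose_sub_smul_one {α : K} {M : Matrix n n K} (hM : IsUnit (M - α • 1)) :
    IsUnit (Mᵀ - α • 1) := by
  simpa [transpose_sub, transpose_smul, transpose_one] using (isUnit_transpose _).2 hM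

lemma cayley_transpose {α : K} {M : Matrix n n K} (hM : IsUnit (M - α • 1)) :
    (cayley α M)ᵀ = cayley α Mᵀ := by
  have hMt := isUnit_transpose_sub_smul_one hM
  have hl := nonsing_inv_mul_of_isUnit hMt
  have hr := mul_nonsing_inv_of_isUnit hMt
  rw [cayley, cayley, transpose_mul, transpose_nonsing_inv, transpose_sub, transpose_add,
    transpose_smul, transpose_one]
  linear_combination (norm := noncomm_ring) hl - hr

lemma cayley_mul_of_mul_eq {α : K} {M N P : Matrix n n K} (hM : IsUnit (M - α • 1))
    (hN : IsUnit (N - α • 1)) (h : M * P = P * N) :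
    cayley α M * P = P * cayley α N := by
  have hl := nonsing_inv_mul_of_isUnit hM
  have hr := mul_nonsing_inv_of_isUnit hN
  have hinv : (M - α • 1)⁻¹ * P = P * (N - α • 1)⁻¹ := by
    linear_combination (norm := noncomm_ring)
      -((M - α • 1)⁻¹ * P * hr) + hl * (P * (N - α • 1)⁻¹) - (M - α • 1)⁻¹ * h * (N - α • 1)⁻¹
  rw [cayley, cayley, mul_assoc, hinv]
  linear_combination (norm := noncomm_ring) h * (N - α • 1)⁻¹

lemma transpose_add_mul_inv_transpose_mul {A G Q : Matrix n n K} (hG : Gᵀ = G) (hQ : Qᵀ = Q) :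
    (A + G * Aᵀ⁻¹ * Q)ᵀ = Aᵀ + Q * A⁻¹ * G := by
  rw [transpose_add, transpose_mul, transpose_mul, transpose_nonsing_inv, transpose_transpose,
    hG, hQ, mul_assoc]

lemma transpose_add_mul_inv_mul_eq {A G Q : Matrix n n K} (hA : IsUnit A) :
    Aᵀ + Q * A⁻¹ * G = (1 + Q * (A⁻¹ * G * Aᵀ⁻¹)) * Aᵀ := by
  have := nonsing_inv_mul_of_isUnit ((isUnit_transpose A).2 hA)
  linear_combination (norm := noncomm_ring) -(Q * A⁻¹ * G * this)

end CommRing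

section RCLike

open scoped ComplexOrder

variable {𝕜 : Type*} [RCLike 𝕜] {n : Type*} [Fintype n] [DecidableEq n]

open scoped MatrixOrder in
lemma PosSemidef.exists_eq_conjTranspose_mul_self {P : Matrix n n 𝕜} (hP : P.PosSemidef) :
    ∃ L : Matrix n n 𝕜, P = Lᴴ * L :=
  ⟨CFC.sqrt P, by
    rw [(CFC.sqrt_nonneg P).posSemidef.isHermitian.eq, CFC.sqrt_mul_sqrt_self P hP.nonneg]⟩

lemma isUnit_one_add_mul_of_posSemidef {P N : Matrix n n 𝕜} (hP : P.PosSemidef)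
    (hN : N.PosSemidef) : IsUnit (1 + N * P) := by
  obtain ⟨L, rfl⟩ := hP.exists_eq_conjTranspose_mul_self
  have hpd : (1 + L * N * Lᴴ).PosDef := PosDef.one.add_posSemidef (hN.mul_mul_conjTranspose_same L)
  rw [← mul_assoc]
  exact isUnit_one_add_mul_comm (by rw [← mul_assoc]; exact hpd.isUnit)

lemma PosSemidef.mul_inv_one_add_mul {P N : Matrix n n 𝕜} (hP : P.PosSemidef)
    (hN : N.PosSemidef) : (P * (1 + N * P)⁻¹).PosSemidef := by
  obtain ⟨L, rfl⟩ := hP.exists_eq_conjTranspose_mul_self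
  have hpd : (1 + L * N * Lᴴ).PosDef := PosDef.one.add_posSemidef (hN.mul_mul_conjTranspose_same L)
  have hu : IsUnit (1 + N * Lᴴ * L) :=
    isUnit_one_add_mul_comm (by rw [← mul_assoc]; exact hpd.isUnit)
  rw [← mul_assoc N, mul_assoc Lᴴ, mul_inv_one_add_mul_comm hu, ← mul_assoc L, ← mul_assoc]
  exact hpd.posSemidef.inv.conjTranspose_mul_mul_same L

lemma PosSemidef.inv_one_add_mul_mul {P N : Matrix n n 𝕜} (hP : P.PosSemidef)
    (hN : N.PosSemidef) : ((1 + P * N)⁻¹ * P).PosSemidef := by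
  rw [← mul_inv_one_add_mul_comm (isUnit_one_add_mul_of_posSemidef hP hN)]
  exact hP.mul_inv_one_add_mul hN

end RCLike

section Real

variable {n : Type*}

lemma PosSemidef.transpose_eq {P : Matrix n n ℝ} (hP : P.PosSemidef) : Pᵀ = P :=
  (isHermitian_iff_isSymm.1 hP.isHermitian).eq

variable [Fintype n]

lemma PosSemidef.transpose_mul_mul_same {m : Type*} [Fintype m] {P : Matrix n n ℝ}
    (hP : P.PosSemidef) (E : Matrix n m ℝ) : (Eᵀ * P * E).PosSemidef := by
  simpa using hP.conjTranspose_mul_mul_same E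

lemma PosSemidef.mul_mul_transpose_same {m : Type*} [Fintype m] {P : Matrix n n ℝ}
    (hP : P.PosSemidef) (E : Matrix m n ℝ) : (E * P * Eᵀ).PosSemidef := by
  simpa using hP.mul_mul_conjTranspose_same E

variable [DecidableEq n]

lemma isUnit_transpose_add_mul_inv_mul {A G Q : Matrix n n ℝ} (hA : IsUnit A)
    (hG : G.PosSemidef) (hQ : Q.PosSemidef) : IsUnit (Aᵀ + Q * A⁻¹ * G) := by
  rw [transpose_add_mul_inv_mul_eq hA, ← transpose_nonsing_inv]
  exact (isUnit_one_add_mul_of_posSemidef (hG.mul_mul_transpose_same A⁻¹) hQ).mul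
    ((isUnit_transpose A).2 hA)

lemma posSemidef_inv_mul_mul_inv_transpose_add_mul_inv_mul {A G Q : Matrix n n ℝ}
    (hA : IsUnit A) (hG : G.PosSemidef) (hQ : Q.PosSemidef) :
    (A⁻¹ * G * (Aᵀ + Q * A⁻¹ * G)⁻¹).PosSemidef := by
  rw [transpose_add_mul_inv_mul_eq hA, mul_inv_rev, ← mul_assoc, ← transpose_nonsing_inv]
  exact (hG.mul_mul_transpose_same A⁻¹).mul_inv_one_add_mul hQ

lemma posSemidef_inv_transpose_add_mul_inv_mul_mul_mul_inv {A G Q : Matrix n n ℝ}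
    (hA : IsUnit A) (hG : G.PosSemidef) (hQ : Q.PosSemidef) :
    ((Aᵀ + Q * A⁻¹ * G)⁻¹ * Q * A⁻¹).PosSemidef := by
  rw [transpose_add_mul_inv_mul_eq hA, mul_inv_rev, ← transpose_nonsing_inv, mul_assoc A⁻¹ᵀ]
  exact (hQ.inv_one_add_mul_mul (hG.mul_mul_transpose_same A⁻¹)).transpose_mul_mul_same A⁻¹

end Real

end Matrix

section Doubling

variable {K : Type*} [CommRing K] {n : Type*} [Fintype n] [DecidableEq n]
  {X Y Â Xk Yk E F : Matrix n n K}

lemma hat_doubling_eq (hu : IsUnit (1 + Xk * Yk)) (hÂ : Â = (1 + Yk * X) * E)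
    (hX : X - Xk = Âᵀ * X * E) :
    Â * (1 + Yk * Xk)⁻¹ * Â = (1 + (Yk + Â * Yk * (1 + Xk * Yk)⁻¹ * Âᵀ) * X) * (E * E) := by
  have hc := mul_inv_one_add_mul_comm hu
  have hK := nonsing_inv_mul_of_isUnit (isUnit_one_add_mul_comm hu)
  linear_combination (norm := noncomm_ring)
    Â * (1 + Yk * Xk)⁻¹ * hÂ + hÂ * E + Â * Yk * (1 + Xk * Yk)⁻¹ * hX * E
      - Â * hc * ((X - Xk) * E) + Â * hK * E

lemma sub_doubling_eq (hu : IsUnit (1 + Xk * Yk)) (hÂ : Â = (1 + Yk * X) * E)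
    (hX : X - Xk = Âᵀ * X * E) :
    X - (Xk + Âᵀ * (1 + Xk * Yk)⁻¹ * Xk * Â) = Âᵀ * (1 + Xk * Yk)⁻¹ * Âᵀ * X * (E * E) := by
  have hJ := nonsing_inv_mul_of_isUnit hu
  linear_combination (norm := noncomm_ring)
    hX + Âᵀ * (1 + Xk * Yk)⁻¹ * hX * E - Âᵀ * (1 + Xk * Yk)⁻¹ * Xk * hÂ - Âᵀ * hJ * X * E

structure DoublingInvariant (X Y Â Xk Yk E F : Matrix n n K) : Prop where
  hat_eq : Â = (1 + Yk * X) * E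
  hat_transpose_eq : Âᵀ = (1 + Xk * Y) * F
  sub_left_eq : X - Xk = Âᵀ * X * E
  sub_right_eq : Y - Yk = Â * Y * F

namespace DoublingInvariant

lemma swap (h : DoublingInvariant X Y Â Xk Yk E F) : DoublingInvariant Y X Âᵀ Yk Xk F E where
  hat_eq := h.hat_transpose_eq
  hat_transpose_eq := by rw [transpose_transpose, h.hat_eq]
  sub_left_eq := by rw [transpose_transpose, h.sub_right_eq]
  sub_right_eq := h.sub_left_eq

lemma step (h : DoublingInvariant X Y Â Xk Yk E F) (hXk : Xkᵀ = Xk) (hYk : Ykᵀ = Yk)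
    (hu : IsUnit (1 + Xk * Yk)) :
    DoublingInvariant X Y (Â * (1 + Yk * Xk)⁻¹ * Â) (Xk + Âᵀ * (1 + Xk * Yk)⁻¹ * Xk * Â)
      (Yk + Â * Yk * (1 + Xk * Yk)⁻¹ * Âᵀ) (E * E) (F * F) := by
  have hu' := isUnit_one_add_mul_comm hu
  have hT : (Â * (1 + Yk * Xk)⁻¹ * Â)ᵀ = Âᵀ * (1 + Xk * Yk)⁻¹ * Âᵀ := by
    rw [transpose_mul, transpose_mul, transpose_nonsing_inv, transpose_add, transpose_one,
      transpose_mul, hXk, hYk, mul_assoc]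
  have hX' : Âᵀ * (1 + Xk * Yk)⁻¹ * Xk * Â = Âᵀ * Xk * (1 + Yk * Xk)⁻¹ * Â := by
    rw [mul_assoc Âᵀ, ← mul_inv_one_add_mul_comm hu', ← mul_assoc]
  have hY' : Â * Yk * (1 + Xk * Yk)⁻¹ * Âᵀ = Â * (1 + Yk * Xk)⁻¹ * Yk * Âᵀ := by
    rw [mul_assoc Â, mul_inv_one_add_mul_comm hu, ← mul_assoc]
  have hdual_hat := hat_doubling_eq hu' h.swap.hat_eq h.swap.sub_left_eq
  have hdual_sub := sub_doubling_eq hu' h.swap.hat_eq h.swap.sub_left_eq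
  rw [transpose_transpose] at hdual_hat hdual_sub
  refine ⟨hat_doubling_eq hu h.hat_eq h.sub_left_eq, ?_, ?_, ?_⟩
  · rw [hT, hX', hdual_hat]
  · rw [hT, sub_doubling_eq hu h.hat_eq h.sub_left_eq]
  · rw [hY', hdual_sub]

lemma sub_left_eq_transpose_mul (h : DoublingInvariant X Y Â Xk Yk E F) (hX : Xᵀ = X)
    (hYk : Ykᵀ = Yk) : X - Xk = Eᵀ * (X + X * Yk * X) * E := by
  rw [h.sub_left_eq, h.hat_eq, transpose_mul, transpose_add, transpose_one, transpose_mul, hX,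
    hYk]
  noncomm_ring

end DoublingInvariant

end Doubling

section Riccati

variable {K : Type*} [CommRing K] {n : Type*} [Fintype n] [DecidableEq n]
  {A G Q X Y Aα Uα Vα R S : Matrix n n K} {α : K}

lemma inv_mul_mul_inv_eq_inv_mul_mul_inv (hUα : Uα = Aαᵀ + Q * Aα⁻¹ * G)
    (hVα : Vα = Aα + G * Aαᵀ⁻¹ * Q) (hAu : IsUnit Aα) (hUu : IsUnit Uα) (hVu : IsUnit Vα) :
    Aα⁻¹ * G * Uα⁻¹ = Vα⁻¹ * G * Aαᵀ⁻¹ := by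
  have hv : Vα⁻¹ * (Aα + G * Aαᵀ⁻¹ * Q) = 1 := by rw [← hVα]; exact nonsing_inv_mul_of_isUnit hVu
  have hu : (Aαᵀ + Q * Aα⁻¹ * G) * Uα⁻¹ = 1 := by rw [← hUα]; exact mul_nonsing_inv_of_isUnit hUu
  have ha := mul_nonsing_inv_of_isUnit hAu
  have hat := nonsing_inv_mul_of_isUnit ((isUnit_transpose Aα).2 hAu)
  linear_combination (norm := noncomm_ring)
    -(hv * (Aα⁻¹ * G * Uα⁻¹)) + (Vα⁻¹ * G * Aαᵀ⁻¹) * hu + Vα⁻¹ * ha * G * Uα⁻¹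
      - Vα⁻¹ * G * hat * Uα⁻¹

lemma riccati_sub_smul_one (hAα : Aα = A - α • 1) (hCARE : Aᵀ * X + X * A + Q - X * G * X = 0) :
    Aαᵀ * X + X * Aα + (2 * α) • X + Q - X * G * X = 0 := by
  subst hAα
  rw [transpose_sub, transpose_smul, transpose_one]
  linear_combination (norm := (noncomm_ring; module)) hCARE

lemma one_add_smul_inv_eq_mul_cayley (hAα : Aα = A - α • 1) (hVα : Vα = Aα + G * Aαᵀ⁻¹ * Q)
    (hAu : IsUnit Aα) (hVu : IsUnit Vα) (hR : R = A - G * X) (hRu : IsUnit (R - α • 1))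
    (hCARE : Aᵀ * X + X * A + Q - X * G * X = 0) :
    1 + (2 * α) • Vα⁻¹ = (1 + ((2 * α) • (Vα⁻¹ * G * Aαᵀ⁻¹)) * X) * cayley α R := by
  have hv : Vα⁻¹ * (Aα + G * Aαᵀ⁻¹ * Q) = 1 := by rw [← hVα]; exact nonsing_inv_mul_of_isUnit hVu
  have hat := nonsing_inv_mul_of_isUnit ((isUnit_transpose Aα).2 hAu)
  have hCAREα := riccati_sub_smul_one hAα hCARE
  apply eq_mul_cayley hRu
  rw [show R - α • 1 = Aα - G * X by rw [hR, hAα]; abel,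
    show R + α • 1 = Aα - G * X + (2 * α) • 1 by rw [hR, hAα]; module]
  linear_combination (norm := (noncomm_ring; module))
    (2 * α) • hv + ((2 * α) • (Vα⁻¹ * G)) * hat * X - ((2 * α) • (Vα⁻¹ * G * Aαᵀ⁻¹)) * hCAREα

lemma sub_smul_inv_eq_mul_cayley (hAα : Aα = A - α • 1) (hUα : Uα = Aαᵀ + Q * Aα⁻¹ * G)
    (hAu : IsUnit Aα) (hUu : IsUnit Uα) (hR : R = A - G * X) (hRu : IsUnit (R - α • 1))
    (hCARE : Aᵀ * X + X * A + Q - X * G * X = 0) :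
    X - (2 * α) • (Uα⁻¹ * Q * Aα⁻¹) = (1 + (2 * α) • Uα⁻¹) * X * cayley α R := by
  have hu : Uα⁻¹ * (Aαᵀ + Q * Aα⁻¹ * G) = 1 := by rw [← hUα]; exact nonsing_inv_mul_of_isUnit hUu
  have ha := nonsing_inv_mul_of_isUnit hAu
  have hCAREα := riccati_sub_smul_one hAα hCARE
  apply eq_mul_cayley hRu
  rw [show R - α • 1 = Aα - G * X by rw [hR, hAα]; abel,
    show R + α • 1 = Aα - G * X + (2 * α) • 1 by rw [hR, hAα]; module]
  linear_combination (norm := (noncomm_ring; module))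
    (2 * α) • hu * X - ((2 * α) • Uα⁻¹) * hCAREα - ((2 * α) • (Uα⁻¹ * Q)) * ha

lemma doublingInvariant_zero (hG : Gᵀ = G) (hQ : Qᵀ = Q) (hAα : Aα = A - α • 1)
    (hUα : Uα = Aαᵀ + Q * Aα⁻¹ * G) (hVα : Vα = Aα + G * Aαᵀ⁻¹ * Q)
    (hAu : IsUnit Aα) (hUu : IsUnit Uα) (hVu : IsUnit Vα)
    (hCARE : Aᵀ * X + X * A + Q - X * G * X = 0) (hDUAL : A * Y + Y * Aᵀ - Y * Q * Y + G = 0)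
    (hR : R = A - G * X) (hS : S = Aᵀ - Q * Y) (hRu : IsUnit (R - α • 1))
    (hSu : IsUnit (S - α • 1)) :
    DoublingInvariant X Y (1 + (2 * α) • Vα⁻¹) ((2 * α) • (Uα⁻¹ * Q * Aα⁻¹))
      ((2 * α) • (Aα⁻¹ * G * Uα⁻¹)) (cayley α R) (cayley α S) := by
  have hÂ : (1 + (2 * α) • Vα⁻¹)ᵀ = 1 + (2 * α) • Uα⁻¹ := by
    rw [transpose_add, transpose_one, transpose_smul, transpose_nonsing_inv, hVα,
      transpose_add_mul_inv_transpose_mul hG hQ, hUα]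
  have hAαt : Aαᵀ = Aᵀ - α • 1 := by rw [hAα, transpose_sub, transpose_smul, transpose_one]
  have hUα' : Uα = Aαᵀ + Q * Aαᵀᵀ⁻¹ * G := by rwa [transpose_transpose]
  have hVα' : Vα = Aαᵀᵀ + G * Aαᵀ⁻¹ * Q := by rwa [transpose_transpose]
  have hDUAL' : Aᵀᵀ * Y + Y * Aᵀ + G - Y * Q * Y = 0 := by
    rw [transpose_transpose, ← hDUAL]; abel
  have hAtu := (isUnit_transpose Aα).2 hAu
  rw [inv_mul_mul_inv_eq_inv_mul_mul_inv hUα hVα hAu hUu hVu]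
  refine ⟨one_add_smul_inv_eq_mul_cayley hAα hVα hAu hVu hR hRu hCARE, ?_,
    hÂ ▸ sub_smul_inv_eq_mul_cayley hAα hUα hAu hUu hR hRu hCARE, ?_⟩
  · simpa only [hÂ, transpose_transpose] using
      one_add_smul_inv_eq_mul_cayley hAαt hUα' hAtu hUu hS hSu hDUAL'
  · simpa only [transpose_transpose] using
      sub_smul_inv_eq_mul_cayley hAαt hVα' hAtu hVu hS hSu hDUAL'

lemma transpose_sub_mul_mul_one_add_mul (hG : Gᵀ = G) (hX : Xᵀ = X)
    (hCARE : Aᵀ * X + X * A + Q - X * G * X = 0) (hDUAL : A * Y + Y * Aᵀ - Y * Q * Y + G = 0) :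
    (A - G * X)ᵀ * (1 + X * Y) = (1 + X * Y) * (Aᵀ - Q * Y) := by
  rw [transpose_sub, transpose_mul, hG, hX]
  linear_combination (norm := noncomm_ring) hCARE * Y - X * hDUAL

lemma cayley_pow_transpose_mul_one_add_mul (hG : Gᵀ = G) (hX : Xᵀ = X)
    (hCARE : Aᵀ * X + X * A + Q - X * G * X = 0) (hDUAL : A * Y + Y * Aᵀ - Y * Q * Y + G = 0)
    (hR : R = A - G * X) (hS : S = Aᵀ - Q * Y) (hRu : IsUnit (R - α • 1))
    (hSu : IsUnit (S - α • 1)) (N : ℕ) :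
    (cayley α R ^ N)ᵀ * (1 + X * Y) = (1 + X * Y) * cayley α S ^ N := by
  have h := cayley_mul_of_mul_eq (isUnit_transpose_sub_smul_one hRu) hSu
    (hR ▸ hS ▸ transpose_sub_mul_mul_one_add_mul hG hX hCARE hDUAL)
  rw [← cayley_transpose hRu] at h
  rw [transpose_pow]
  exact (SemiconjBy.pow_right h.symm N).symm

end Riccati

section Positivity

variable {n : Type*} [Fintype n] [DecidableEq n] {X Y Â Xk Yk E F : Matrix n n ℝ}

lemma posSemidef_transpose_mul_inv_one_add_mul_mul_mul (hXk : Xk.PosSemidef)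
    (hYk : Yk.PosSemidef) :
    (Âᵀ * (1 + Xk * Yk)⁻¹ * Xk * Â).PosSemidef := by
  rw [mul_assoc Âᵀ]
  exact (hXk.inv_one_add_mul_mul hYk).transpose_mul_mul_same Â

lemma posSemidef_mul_mul_inv_one_add_mul_mul_transpose (hXk : Xk.PosSemidef)
    (hYk : Yk.PosSemidef) :
    (Â * Yk * (1 + Xk * Yk)⁻¹ * Âᵀ).PosSemidef := by
  rw [mul_assoc Â]
  exact (hYk.mul_inv_one_add_mul hXk).mul_mul_transpose_same Â

namespace DoublingInvariant

lemma posSemidef_sub_left (h : DoublingInvariant X Y Â Xk Yk E F) (hX : X.PosSemidef)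
    (hYk : Yk.PosSemidef) : (X - Xk).PosSemidef := by
  have hXYX : (X * Yk * X).PosSemidef := by
    simpa only [hX.transpose_eq] using hYk.transpose_mul_mul_same X
  rw [h.sub_left_eq_transpose_mul hX.transpose_eq hYk.transpose_eq]
  exact (hX.add hXYX).transpose_mul_mul_same E

lemma posSemidef_bound (h : DoublingInvariant X Y Â Xk Yk E F) (hX : X.PosSemidef)
    (hY : Y.PosSemidef) (hXk : Xk.PosSemidef) (hYk : Yk.PosSemidef)
    (hEF : Eᵀ * (1 + X * Y) = (1 + X * Y) * F) :
    ((1 + X * Y) * F * X * E - (X - Xk)).PosSemidef := by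
  have hXYX : (X * (Y - Yk) * X).PosSemidef := by
    simpa only [hX.transpose_eq] using
      (h.swap.posSemidef_sub_left hY hXk).transpose_mul_mul_same X
  rw [h.sub_left_eq_transpose_mul hX.transpose_eq hYk.transpose_eq, ← hEF]
  convert hXYX.transpose_mul_mul_same E using 1
  noncomm_ring

lemma iterate {Ahat Xs Ys : ℕ → Matrix n n ℝ}
    (h0 : DoublingInvariant X Y (Ahat 0) (Xs 0) (Ys 0) E F)
    (hX0 : (Xs 0).PosSemidef) (hY0 : (Ys 0).PosSemidef)
    (hArec : ∀ k, Ahat (k + 1) = Ahat k * (1 + Ys k * Xs k)⁻¹ * Ahat k)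
    (hXrec : ∀ k, Xs (k + 1) = Xs k + (Ahat k)ᵀ * (1 + Xs k * Ys k)⁻¹ * Xs k * Ahat k)
    (hYrec : ∀ k, Ys (k + 1) = Ys k + Ahat k * Ys k * (1 + Xs k * Ys k)⁻¹ * (Ahat k)ᵀ) (k : ℕ) :
    DoublingInvariant X Y (Ahat k) (Xs k) (Ys k) (E ^ 2 ^ k) (F ^ 2 ^ k) ∧
      (Xs k).PosSemidef ∧ (Ys k).PosSemidef := by
  induction k with
  | zero => simpa using ⟨h0, hX0, hY0⟩
  | succ k ih =>
    obtain ⟨h, hXk, hYk⟩ := ih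
    rw [hArec, hXrec, hYrec, pow_succ, pow_mul, pow_mul, sq, sq]
    exact ⟨h.step hXk.transpose_eq hYk.transpose_eq (isUnit_one_add_mul_of_posSemidef hYk hXk),
      hXk.add (posSemidef_transpose_mul_inv_one_add_mul_mul_mul hXk hYk),
      hYk.add (posSemidef_mul_mul_inv_one_add_mul_mul_transpose hXk hYk)⟩

end DoublingInvariant

end Positivity

theorem stmt_6_general (n m p : ℕ)
    (A G Q : Matrix (Fin n) (Fin n) ℝ)
    (B : Matrix (Fin n) (Fin m) ℝ) (C : Matrix (Fin p) (Fin n) ℝ)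
    (hG : G = B * Bᵀ) (hQ : Q = Cᵀ * C)
    (α : ℝ) (hα : 0 < α)
    (Aα Uα Vα : Matrix (Fin n) (Fin n) ℝ)
    (hAα : Aα = A - α • 1)
    (hUα : Uα = Aαᵀ + Q * Aα⁻¹ * G)
    (hVα : Vα = Aα + G * (Aαᵀ)⁻¹ * Q)
    (hAαu : IsUnit Aα)
    (X Y : Matrix (Fin n) (Fin n) ℝ)
    (hXpsd : X.PosSemidef) (hYpsd : Y.PosSemidef)
    (hCARE : Aᵀ * X + X * A + Q - X * G * X = 0)
    (hDUAL : A * Y + Y * Aᵀ - Y * Q * Y + G = 0)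
    (R S : Matrix (Fin n) (Fin n) ℝ)
    (hR : R = A - G * X) (hS : S = Aᵀ - Q * Y)
    (hRu : IsUnit (R - α • 1)) (hSu : IsUnit (S - α • 1))
    (CR CS : Matrix (Fin n) (Fin n) ℝ)
    (hCR : CR = (R + α • 1) * (R - α • 1)⁻¹)
    (hCS : CS = (S + α • 1) * (S - α • 1)⁻¹)
    (Ahat Xs Ys : ℕ → Matrix (Fin n) (Fin n) ℝ)
    (hA0 : Ahat 0 = 1 + (2 * α) • Vα⁻¹)
    (hX0 : Xs 0 = (2 * α) • (Uα⁻¹ * Q * Aα⁻¹))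
    (hY0 : Ys 0 = (2 * α) • (Aα⁻¹ * G * Uα⁻¹))
    (hArec : ∀ k, Ahat (k + 1) = Ahat k * (1 + Ys k * Xs k)⁻¹ * Ahat k)
    (hXrec : ∀ k, Xs (k + 1) = Xs k + (Ahat k)ᵀ * (1 + Xs k * Ys k)⁻¹ * Xs k * Ahat k)
    (hYrec : ∀ k, Ys (k + 1) = Ys k + Ahat k * Ys k * (1 + Xs k * Ys k)⁻¹ * (Ahat k)ᵀ) :
    ∀ k, (Xs k).PosSemidef ∧ (Xs (k + 1) - Xs k).PosSemidef ∧
      (X - Xs (k + 1)).PosSemidef ∧ (X - Xs k).PosSemidef ∧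
      ((1 + X * Y) * CS ^ (2 ^ k) * X * CR ^ (2 ^ k) - (X - Xs k)).PosSemidef := by
  have hGpsd : G.PosSemidef := by simpa [hG] using posSemidef_self_mul_conjTranspose B
  have hQpsd : Q.PosSemidef := by simpa [hQ] using posSemidef_conjTranspose_mul_self C
  have hUαu : IsUnit Uα := hUα ▸ isUnit_transpose_add_mul_inv_mul hAαu hGpsd hQpsd
  have hVαu : IsUnit Vα := by
    simpa only [hVα, transpose_transpose] using
      isUnit_transpose_add_mul_inv_mul ((isUnit_transpose Aα).2 hAαu) hQpsd hGpsd
  have h0 := doublingInvariant_zero hGpsd.transpose_eq hQpsd.transpose_eq hAα hUα hVα hAαu hUαu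
    hVαu hCARE hDUAL hR hS hRu hSu
  rw [← hA0, ← hX0, ← hY0] at h0
  have hX0psd : (Xs 0).PosSemidef := by
    rw [hX0, hUα]
    exact (posSemidef_inv_transpose_add_mul_inv_mul_mul_mul_inv hAαu hGpsd hQpsd).smul
      (by positivity)
  have hY0psd : (Ys 0).PosSemidef := by
    rw [hY0, hUα]
    exact (posSemidef_inv_mul_mul_inv_transpose_add_mul_inv_mul hAαu hGpsd hQpsd).smul
      (by positivity)
  intro k
  obtain ⟨h, hXk, hYk⟩ := h0.iterate hX0psd hY0psd hArec hXrec hYrec k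
  obtain ⟨h', -, hYk'⟩ := h0.iterate hX0psd hY0psd hArec hXrec hYrec (k + 1)
  subst hCR hCS
  refine ⟨hXk, ?_, h'.posSemidef_sub_left hXpsd hYk', h.posSemidef_sub_left hXpsd hYk,
    h.posSemidef_bound hXpsd hYpsd hXk hYk (cayley_pow_transpose_mul_one_add_mul
      hGpsd.transpose_eq hXpsd.transpose_eq hCARE hDUAL hR hS hRu hSu _)⟩
  rw [hXrec, add_sub_cancel_left]
  exact posSemidef_transpose_mul_inv_one_add_mul_mul_mul hXk hYk

theorem stmt_6 (n m p : ℕ)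
    (A G Q : Matrix (Fin n) (Fin n) ℝ)
    (B : Matrix (Fin n) (Fin m) ℝ) (C : Matrix (Fin p) (Fin n) ℝ)
    (hG : G = B * Bᵀ) (hQ : Q = Cᵀ * C)
    (α : ℝ) (hα : 0 < α)
    (Aα Uα Vα : Matrix (Fin n) (Fin n) ℝ)
    (hAα : Aα = A - α • 1)
    (hUα : Uα = Aαᵀ + Q * Aα⁻¹ * G)
    (hVα : Vα = Aα + G * (Aαᵀ)⁻¹ * Q)
    (hAαu : IsUnit Aα) (hUαu : IsUnit Uα) (hVαu : IsUnit Vα)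
    (X Y : Matrix (Fin n) (Fin n) ℝ)
    (hXpsd : X.PosSemidef) (hYpsd : Y.PosSemidef)
    (hCARE : Aᵀ * X + X * A + Q - X * G * X = 0)
    (hDUAL : A * Y + Y * Aᵀ - Y * Q * Y + G = 0)
    (R S : Matrix (Fin n) (Fin n) ℝ)
    (hR : R = A - G * X) (hS : S = Aᵀ - Q * Y)
    (hRu : IsUnit (R - α • 1)) (hSu : IsUnit (S - α • 1))
    (CR CS : Matrix (Fin n) (Fin n) ℝ)
    (hCR : CR = (R + α • 1) * (R - α • 1)⁻¹)
    (hCS : CS = (S + α • 1) * (S - α • 1)⁻¹)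
    (Ahat Xs Ys : ℕ → Matrix (Fin n) (Fin n) ℝ)
    (hA0 : Ahat 0 = 1 + (2 * α) • Vα⁻¹)
    (hX0 : Xs 0 = (2 * α) • (Uα⁻¹ * Q * Aα⁻¹))
    (hY0 : Ys 0 = (2 * α) • (Aα⁻¹ * G * Uα⁻¹))
    (hu1 : ∀ k, IsUnit (1 + Ys k * Xs k))
    (hu2 : ∀ k, IsUnit (1 + Xs k * Ys k))
    (hArec : ∀ k, Ahat (k + 1) = Ahat k * (1 + Ys k * Xs k)⁻¹ * Ahat k)
    (hXrec : ∀ k, Xs (k + 1) = Xs k + (Ahat k)ᵀ * (1 + Xs k * Ys k)⁻¹ * Xs k * Ahat k)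
    (hYrec : ∀ k, Ys (k + 1) = Ys k + Ahat k * Ys k * (1 + Xs k * Ys k)⁻¹ * (Ahat k)ᵀ) :
    ∀ k, (Xs k).PosSemidef ∧ (Xs (k + 1) - Xs k).PosSemidef ∧
      (X - Xs (k + 1)).PosSemidef ∧ (X - Xs k).PosSemidef ∧
      ((1 + X * Y) * CS ^ (2 ^ k) * X * CR ^ (2 ^ k) - (X - Xs k)).PosSemidef :=
  stmt_6_general n m p A G Q B C hG hQ α hα Aα Uα Vα hAα hUα hVα hAαu X Y hXpsd hYpsd hCARE hDUAL R
    S hR hS hRu hSu CR CS hCR hCS Ahat Xs Ys hA0 hX0 hY0 hArec hXrec hYrec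
end

section
/- Under the ADDA setup, for every k ≥ 0 one has ‖Â_k‖₂ ≤ (1 + ‖Y‖₂‖X‖₂)·‖𝒞(R;α)^{2^k}‖₂, and if the spectral radius ρ(𝒞(R;α)) < 1 then ‖Â_k‖₂ → 0 as k → ∞. -/
/-!
Write `𝒞 = 𝒞(R;α)` and `𝒮 = 𝒞(S;α)`. Rearranging the CARE shows that the initial
data satisfy `Â₀ = (I + Y₀ X) 𝒞` and `X - X₀ = Â₀ᵀ X 𝒞`, and one doubling step
preserves both relations while squaring `𝒞`, so `Â_k = (I + Y_k X) 𝒞^(2^k)`. The same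
argument for the dual equation gives `Â_kᵀ = (I + X_k Y) 𝒮^(2^k)` and
`Y - Y_k = Â_k Y 𝒮^(2^k)`, which together exhibit `Y - Y_k` as the congruence
`(𝒮^(2^k))ᵀ (Y + Y X_k Y) 𝒮^(2^k)`. The iterates stay positive semidefinite because
`K (I + G K)⁻¹ ⪰ 0` whenever `K, G ⪰ 0`; hence `0 ⪯ Y_k ⪯ Y`, so `‖Y_k‖₂ ≤ ‖Y‖₂`, and
the bound follows. If `ρ(𝒞) < 1`, Gelfand's formula gives `‖𝒞^N‖₂ → 0`.
-/

open Matrix Filter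
open scoped Matrix.Norms.L2Operator

namespace Matrix

section CommRing

variable {l K : Type*} [Fintype l] [DecidableEq l] [CommRing K]

/-- No invertibility is needed: by the Weinstein–Aronszajn identity `1 + y * x` and `1 + x * y`
are singular together, and then both sides are the junk value `0`. -/
theorem inv_one_add_mul_mul_comm (x y : Matrix l l K) :
    (1 + y * x)⁻¹ * y = y * (1 + x * y)⁻¹ := by
  by_cases h : IsUnit (1 + y * x).det
  · have h' : IsUnit (1 + x * y).det := by rwa [det_one_add_mul_comm]
    calc (1 + y * x)⁻¹ * y = (1 + y * x)⁻¹ * ((1 + y * x) * (y * (1 + x * y)⁻¹)) := by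
          rw [← mul_assoc (1 + y * x), show (1 + y * x) * y = y * (1 + x * y) by noncomm_ring,
            mul_nonsing_inv_cancel_right _ _ h']
      _ = y * (1 + x * y)⁻¹ := nonsing_inv_mul_cancel_left _ _ h
  · have h' : ¬IsUnit (1 + x * y).det := by rwa [det_one_add_mul_comm]
    rw [nonsing_inv_apply_not_isUnit _ h, nonsing_inv_apply_not_isUnit _ h', zero_mul, mul_zero]

theorem eq_mul_nonsing_inv_of_mul_eq {M N F : Matrix l l K} (hF : IsUnit F) (h : M * F = N) :
    M = N * F⁻¹ := by
  rw [← h, mul_nonsing_inv_cancel_right _ _ ((isUnit_iff_isUnit_det F).mp hF)]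

theorem transpose_one_add_mul {x y : Matrix l l K} (hx : xᵀ = x) (hy : yᵀ = y) :
    (1 + y * x)ᵀ = 1 + x * y := by
  rw [transpose_add, transpose_one, transpose_mul, hx, hy]

end CommRing

section Real

variable {l : Type*} [Fintype l] [DecidableEq l]

open scoped MatrixOrder in
theorem PosSemidef.mul_inv_one_add_mul_s9 {K G : Matrix l l ℝ} (hK : K.PosSemidef)
    (hG : G.PosSemidef) : (K * (1 + G * K)⁻¹).PosSemidef := by
  obtain ⟨B, rfl⟩ := CStarAlgebra.nonneg_iff_eq_star_mul_self.mp hK.nonneg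
  have hpos : (1 + B * G * Bᴴ).PosDef :=
    PosDef.one.add_posSemidef (hG.mul_mul_conjTranspose_same B)
  have h : star B * B * (1 + G * (star B * B))⁻¹ = Bᴴ * (1 + B * G * Bᴴ)⁻¹ * B := by
    rw [star_eq_conjTranspose, mul_assoc Bᴴ, ← mul_assoc G, ← inv_one_add_mul_mul_comm,
      ← mul_assoc, mul_assoc B]
  rw [h]
  exact hpos.inv.posSemidef.conjTranspose_mul_mul_same B

open scoped MatrixOrder RealInnerProductSpace in
theorem PosSemidef.l2_opNorm_le {A B : Matrix l l ℝ} (hA : A.PosSemidef)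
    (hAB : (B - A).PosSemidef) : ‖A‖ ≤ ‖B‖ := by
  obtain ⟨S, rfl⟩ := CStarAlgebra.nonneg_iff_eq_star_mul_self.mp hA.nonneg
  let T := toEuclideanCLM (n := l) (𝕜 := ℝ)
  have hSx x : ‖T S x‖ ^ 2 ≤ ‖B‖ * ‖x‖ ^ 2 := by
    have hquad : ⟪x, T (star S * S) x⟫ ≤ ⟪x, T B x⟫ := by
      have := hAB.dotProduct_mulVec_nonneg x
      simp only [star_trivial, sub_mulVec, dotProduct_sub, sub_nonneg] at this
      simpa only [T, inner_toEuclideanCLM] using this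
    calc ‖T S x‖ ^ 2 = ⟪x, T (star S * S) x⟫ := by
          rw [map_mul, map_star, ContinuousLinearMap.star_eq_adjoint, mul_apply_eq_comp,
            ContinuousLinearMap.adjoint_inner_right, real_inner_self_eq_norm_sq]
      _ ≤ ⟪x, T B x⟫ := hquad
      _ ≤ ‖x‖ * ‖T B x‖ := real_inner_le_norm _ _
      _ ≤ ‖x‖ * (‖B‖ * ‖x‖) := by gcongr; exact (T B).le_opNorm x
      _ = ‖B‖ * ‖x‖ ^ 2 := by ring
  have hS : ‖S‖ ≤ √‖B‖ :=
    (T S).opNorm_le_bound (Real.sqrt_nonneg _) fun x ↦ by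
      rw [← Real.sqrt_sq (norm_nonneg (T S x)), ← Real.sqrt_sq (norm_nonneg x),
        ← Real.sqrt_mul (norm_nonneg _)]
      exact Real.sqrt_le_sqrt (hSx x)
  calc ‖star S * S‖ = ‖S‖ * ‖S‖ := l2_opNorm_conjTranspose_mul_self S
    _ ≤ √‖B‖ * √‖B‖ := mul_self_le_mul_self (norm_nonneg _) hS
    _ = ‖B‖ := Real.mul_self_sqrt (norm_nonneg _)

theorem posSemidef_sub_of_eq_mul {Y y x a E : Matrix l l ℝ} (hY : Y.PosSemidef)
    (hx : x.PosSemidef) (hy : yᵀ = y) (ha : aᵀ = (1 + x * Y) * E) (hsub : Y - y = a * Y * E) :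
    (Y - y).PosSemidef := by
  have hYt : Yᵀ = Y := hY.isHermitian
  have h : Y - y = Eᴴ * (Y + Y * x * Y) * E := by
    calc Y - y = (Y - y)ᵀ := by rw [transpose_sub, hYt, hy]
      _ = Eᵀ * Y * aᵀ := by rw [hsub, transpose_mul, transpose_mul, hYt, mul_assoc]
      _ = Eᴴ * (Y + Y * x * Y) * E := by
        rw [ha, conjTranspose_eq_transpose_of_trivial]; noncomm_ring
  have hYxY : (Y * x * Y).PosSemidef := by
    simpa only [hY.isHermitian.eq] using hx.mul_mul_conjTranspose_same Y
  rw [h]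
  exact (hY.add hYxY).conjTranspose_mul_mul_same E

end Real

end Matrix

theorem norm_one_add_mul_mul_le {R : Type*} [SeminormedRing R] (a b : R) :
    ‖(1 + a) * b‖ ≤ (1 + ‖a‖) * ‖b‖ := by
  rw [add_mul, one_mul, add_mul, one_mul]
  exact (norm_add_le _ _).trans (by gcongr; exact norm_mul_le _ _)

theorem tendsto_pow_atTop_nhds_zero_of_spectralRadius_lt_one {A : Type*} [NormedRing A]
    [NormedAlgebra ℂ A] [CompleteSpace A] {a : A} (ha : spectralRadius ℂ a < 1) :
    Tendsto (fun N : ℕ ↦ a ^ N) atTop (nhds 0) := by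
  obtain ⟨r, hρr, hr1⟩ := ENNReal.lt_iff_exists_nnreal_btwn.mp ha
  have hbound : ∀ᶠ N : ℕ in atTop, ‖a ^ N‖ ≤ (r : ℝ) ^ N := by
    filter_upwards [(spectrum.pow_nnnorm_pow_one_div_tendsto_nhds_spectralRadius
      a).eventually_lt_const hρr, eventually_ge_atTop 1] with N hN hN1
    have hN0 : (N : ℝ) ≠ 0 := by positivity
    have hlt : (‖a ^ N‖₊ : ENNReal) < (r : ENNReal) ^ (N : ℝ) := by
      calc (‖a ^ N‖₊ : ENNReal)
          = ((‖a ^ N‖₊ : ENNReal) ^ (1 / (N : ℝ))) ^ (N : ℝ) := by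
            rw [← ENNReal.rpow_mul, one_div, inv_mul_cancel₀ hN0, ENNReal.rpow_one]
        _ < (r : ENNReal) ^ (N : ℝ) := ENNReal.rpow_lt_rpow hN (by positivity)
    rw [ENNReal.rpow_natCast, ← ENNReal.coe_pow, ENNReal.coe_lt_coe] at hlt
    exact_mod_cast hlt.le
  exact tendsto_zero_iff_norm_tendsto_zero.mpr (squeeze_zero' (.of_forall fun _ ↦ norm_nonneg _)
    hbound (tendsto_pow_atTop_nhds_zero_of_lt_one r.coe_nonneg (by exact_mod_cast hr1)))

theorem Matrix.tendsto_norm_pow_of_spectralRadius_lt_one {l : Type*} [Fintype l]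
    [DecidableEq l] {M : Matrix l l ℝ}
    (hM : spectralRadius ℂ (M.map (algebraMap ℝ ℂ)) < 1) :
    Tendsto (fun N : ℕ ↦ ‖M ^ N‖) atTop (nhds 0) := by
  -- The L2 operator norm induces the entrywise topology, so taking real parts is continuous.
  have hre : Tendsto (fun N : ℕ ↦ (M.map (algebraMap ℝ ℂ) ^ N).map Complex.re) atTop
      (nhds ((0 : Matrix l l ℂ).map Complex.re)) :=
    ((continuous_id.matrix_map Complex.continuous_re).tendsto 0).comp
      (tendsto_pow_atTop_nhds_zero_of_spectralRadius_lt_one hM)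
  have hre_pow N : (M.map (algebraMap ℝ ℂ) ^ N).map Complex.re = M ^ N := by
    rw [← Matrix.map_pow, map_map]
    ext i j
    exact Complex.ofReal_re _
  simp only [hre_pow] at hre
  exact tendsto_zero_iff_norm_tendsto_zero.mp hre

section Doubling

variable {l K : Type*} [Fintype l] [DecidableEq l] [CommRing K]

structure IsDoublingIteration (a x y : ℕ → Matrix l l K) : Prop where
  a_succ : ∀ k, a (k + 1) = a k * (1 + y k * x k)⁻¹ * a k
  x_succ : ∀ k, x (k + 1) = x k + (a k)ᵀ * (1 + x k * y k)⁻¹ * x k * a k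
  y_succ : ∀ k, y (k + 1) = y k + a k * y k * (1 + x k * y k)⁻¹ * (a k)ᵀ

theorem doubling_step_invariant {a x y X E : Matrix l l K} (hx : xᵀ = x) (hy : yᵀ = y)
    (hu : IsUnit (1 + y * x)) (ha : a = (1 + y * X) * E) (hX : X - x = aᵀ * X * E) :
    a * (1 + y * x)⁻¹ * a = (1 + (y + a * y * (1 + x * y)⁻¹ * aᵀ) * X) * (E * E) ∧
      X - (x + aᵀ * (1 + x * y)⁻¹ * x * a) = (a * (1 + y * x)⁻¹ * a)ᵀ * X * (E * E) := by
  have hdet : IsUnit (1 + x * y).det := by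
    rw [det_one_add_mul_comm, ← isUnit_iff_isUnit_det]; exact hu
  have hleft : (1 + y * x)⁻¹ * (1 + y * X) = 1 + y * (1 + x * y)⁻¹ * (X - x) := by
    calc (1 + y * x)⁻¹ * (1 + y * X) = (1 + y * x)⁻¹ * ((1 + y * x) + y * (X - x)) := by
          congr 1; noncomm_ring
      _ = 1 + (1 + y * x)⁻¹ * y * (X - x) := by
          rw [mul_add, nonsing_inv_mul _ ((isUnit_iff_isUnit_det _).mp hu), mul_assoc]
      _ = 1 + y * (1 + x * y)⁻¹ * (X - x) := by rw [inv_one_add_mul_mul_comm]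
  have hright : X - (1 + x * y)⁻¹ * x * (1 + y * X) = (1 + x * y)⁻¹ * (X - x) := by
    calc X - (1 + x * y)⁻¹ * x * (1 + y * X)
        = (1 + x * y)⁻¹ * ((1 + x * y) * X) - (1 + x * y)⁻¹ * (x + x * y * X) := by
          rw [nonsing_inv_mul_cancel_left _ _ hdet]; noncomm_ring
      _ = (1 + x * y)⁻¹ * (X - x) := by noncomm_ring
  have haT : (a * (1 + y * x)⁻¹ * a)ᵀ = aᵀ * (1 + x * y)⁻¹ * aᵀ := by
    rw [transpose_mul, transpose_mul, transpose_nonsing_inv, transpose_one_add_mul hx hy,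
      mul_assoc]
  constructor
  · calc a * (1 + y * x)⁻¹ * a = a * ((1 + y * x)⁻¹ * (1 + y * X)) * E := by
          nth_rw 2 [ha]; noncomm_ring
      _ = a * E + a * y * (1 + x * y)⁻¹ * (aᵀ * X * E) * E := by
          rw [hleft, ← hX]; noncomm_ring
      _ = (1 + (y + a * y * (1 + x * y)⁻¹ * aᵀ) * X) * (E * E) := by
          nth_rw 1 [ha]; noncomm_ring
  · calc X - (x + aᵀ * (1 + x * y)⁻¹ * x * a)
        = aᵀ * X * E - aᵀ * (1 + x * y)⁻¹ * x * ((1 + y * X) * E) := by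
          rw [← ha, sub_add_eq_sub_sub, hX]
      _ = aᵀ * (X - (1 + x * y)⁻¹ * x * (1 + y * X)) * E := by noncomm_ring
      _ = (a * (1 + y * x)⁻¹ * a)ᵀ * X * (E * E) := by
          rw [hright, haT, hX]; noncomm_ring

namespace IsDoublingIteration

variable {a x y : ℕ → Matrix l l K}

theorem eq_mul_pow (h : IsDoublingIteration a x y) (hx : ∀ k, (x k)ᵀ = x k)
    (hy : ∀ k, (y k)ᵀ = y k) (hu : ∀ k, IsUnit (1 + y k * x k)) {X E : Matrix l l K}
    (ha₀ : a 0 = (1 + y 0 * X) * E) (hX₀ : X - x 0 = (a 0)ᵀ * X * E) (k : ℕ) :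
    a k = (1 + y k * X) * E ^ 2 ^ k ∧ X - x k = (a k)ᵀ * X * E ^ 2 ^ k := by
  induction k with
  | zero => simpa using ⟨ha₀, hX₀⟩
  | succ k ih =>
    rw [h.a_succ, h.x_succ, h.y_succ, pow_succ, pow_mul, sq]
    exact doubling_step_invariant (hx k) (hy k) (hu k) ih.1 ih.2

theorem transpose (h : IsDoublingIteration a x y) (hx : ∀ k, (x k)ᵀ = x k)
    (hy : ∀ k, (y k)ᵀ = y k) : IsDoublingIteration (fun k ↦ (a k)ᵀ) y x where
  a_succ k := by
    rw [h.a_succ, transpose_mul, transpose_mul, transpose_nonsing_inv,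
      transpose_one_add_mul (hx k) (hy k), mul_assoc]
  x_succ k := by
    rw [h.y_succ, transpose_transpose, mul_assoc (a k) (y k), ← inv_one_add_mul_mul_comm,
      ← mul_assoc]
  y_succ k := by
    rw [h.x_succ, transpose_transpose, mul_assoc _ (1 + x k * y k)⁻¹ (x k),
      inv_one_add_mul_mul_comm, ← mul_assoc]

theorem posSemidef {a x y : ℕ → Matrix l l ℝ} (h : IsDoublingIteration a x y)
    (hx₀ : (x 0).PosSemidef) (hy₀ : (y 0).PosSemidef) (k : ℕ) :
    (x k).PosSemidef ∧ (y k).PosSemidef := by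
  induction k with
  | zero => exact ⟨hx₀, hy₀⟩
  | succ k ih =>
    obtain ⟨hx, hy⟩ := ih
    have hx' : (a k)ᵀ * (1 + x k * y k)⁻¹ * x k * a k =
        (a k)ᴴ * (x k * (1 + y k * x k)⁻¹) * a k := by
      rw [← inv_one_add_mul_mul_comm, conjTranspose_eq_transpose_of_trivial, mul_assoc (a k)ᵀ]
    have hy' : a k * y k * (1 + x k * y k)⁻¹ * (a k)ᵀ =
        a k * (y k * (1 + x k * y k)⁻¹) * (a k)ᴴ := by
      rw [conjTranspose_eq_transpose_of_trivial, mul_assoc (a k)]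
    rw [h.x_succ, h.y_succ, hx', hy']
    exact ⟨hx.add ((hx.mul_inv_one_add_mul_s9 hy).conjTranspose_mul_mul_same _),
      hy.add ((hy.mul_inv_one_add_mul_s9 hx).mul_mul_conjTranspose_same _)⟩

end IsDoublingIteration

end Doubling

namespace ADDA

theorem posSemidef_initial {l : Type*} [Fintype l] [DecidableEq l] {A G Q : Matrix l l ℝ}
    (hA : IsUnit A) (hG : G.PosSemidef) (hQ : Q.PosSemidef) :
    ((Aᵀ + Q * A⁻¹ * G)⁻¹ * Q * A⁻¹).PosSemidef ∧
      (A⁻¹ * G * (Aᵀ + Q * A⁻¹ * G)⁻¹).PosSemidef := by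
  set K := (A⁻¹)ᴴ * Q * A⁻¹ with hKdef
  have hK : K.PosSemidef := hQ.conjTranspose_mul_mul_same _
  have hinv : (Aᵀ + Q * A⁻¹ * G)⁻¹ = (1 + K * G)⁻¹ * (A⁻¹)ᴴ := by
    have hAA : Aᵀ * (A⁻¹)ᴴ = 1 := by
      rw [conjTranspose_eq_transpose_of_trivial, ← transpose_mul,
        nonsing_inv_mul _ ((isUnit_iff_isUnit_det A).mp hA), transpose_one]
    have hAK : Aᵀ + Q * A⁻¹ * G = Aᵀ * (1 + K * G) := by
      rw [hKdef, mul_add, mul_one, ← mul_assoc, ← mul_assoc, ← mul_assoc, hAA, one_mul]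
    rw [hAK, Matrix.mul_inv_rev, ← transpose_nonsing_inv, conjTranspose_eq_transpose_of_trivial]
  constructor
  · have h : (Aᵀ + Q * A⁻¹ * G)⁻¹ * Q * A⁻¹ = K * (1 + G * K)⁻¹ := by
      rw [hinv, ← inv_one_add_mul_mul_comm, hKdef]; simp only [mul_assoc]
    exact h ▸ hK.mul_inv_one_add_mul_s9 hG
  · have h : A⁻¹ * G * (Aᵀ + Q * A⁻¹ * G)⁻¹ =
        A⁻¹ * (G * (1 + K * G)⁻¹) * (A⁻¹)ᴴ := by
      rw [hinv]; simp only [mul_assoc]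
    exact h ▸ (hG.mul_inv_one_add_mul_s9 hK).mul_mul_conjTranspose_same _

section CommRing

variable {l K : Type*} [Fintype l] [DecidableEq l] [CommRing K]
variable {A G Q X Aα U V : Matrix l l K} {α : K}

theorem mul_inv_mul_eq_mul_inv_mul (hAαu : IsUnit Aα) (hU : U = Aαᵀ + Q * Aα⁻¹ * G)
    (hV : V = Aα + G * (Aαᵀ)⁻¹ * Q) : V * (Aα⁻¹ * G) = G * (Aαᵀ)⁻¹ * U := by
  have hA : Aα * Aα⁻¹ = 1 := mul_nonsing_inv _ ((isUnit_iff_isUnit_det _).mp hAαu)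
  have hAT : (Aαᵀ)⁻¹ * Aαᵀ = 1 :=
    nonsing_inv_mul _ ((isUnit_iff_isUnit_det _).mp ((isUnit_transpose Aα).mpr hAαu))
  calc V * (Aα⁻¹ * G) = Aα * Aα⁻¹ * G + G * (Aαᵀ)⁻¹ * Q * Aα⁻¹ * G := by
        rw [hV]; noncomm_ring
    _ = G * ((Aαᵀ)⁻¹ * Aαᵀ) + G * (Aαᵀ)⁻¹ * Q * Aα⁻¹ * G := by
        rw [hA, hAT, one_mul, mul_one]
    _ = G * (Aαᵀ)⁻¹ * U := by rw [hU]; noncomm_ring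

theorem one_add_smul_inv_eq_mul_cayley (hAα : Aα = A - α • 1)
    (hU : U = Aαᵀ + Q * Aα⁻¹ * G) (hV : V = Aα + G * (Aαᵀ)⁻¹ * Q) (hAαu : IsUnit Aα)
    (hUu : IsUnit U) (hVu : IsUnit V)
    (hCARE : Aᵀ * X + X * A + Q - X * G * X = 0) (hRu : IsUnit (A - G * X - α • 1)) :
    1 + (2 * α) • V⁻¹ =
      (1 + (2 * α) • (Aα⁻¹ * G * U⁻¹) * X) *
        ((A - G * X + α • 1) * (A - G * X - α • 1)⁻¹) := by
  -- After clearing `V⁻¹` and `(R - α)⁻¹`, the two sides differ by a multiple of the CARE.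
  rw [← mul_assoc]
  refine eq_mul_nonsing_inv_of_mul_eq hRu (hVu.mul_left_cancel ?_)
  have hVV : V * V⁻¹ = 1 := mul_nonsing_inv _ ((isUnit_iff_isUnit_det _).mp hVu)
  have hAT : (Aαᵀ)⁻¹ * Aαᵀ = 1 :=
    nonsing_inv_mul _ ((isUnit_iff_isUnit_det _).mp ((isUnit_transpose Aα).mpr hAαu))
  have hVG : V * (Aα⁻¹ * G * U⁻¹) = G * (Aαᵀ)⁻¹ := by
    rw [← mul_assoc, mul_inv_mul_eq_mul_inv_mul hAαu hU hV,
      mul_nonsing_inv_cancel_right _ _ ((isUnit_iff_isUnit_det _).mp hUu)]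
  calc V * ((1 + (2 * α) • V⁻¹) * (A - G * X - α • 1))
      = (V + (2 * α) • 1) * (A - G * X - α • 1) := by
        rw [← mul_assoc, mul_add, mul_one, mul_smul_comm, hVV]
    _ = (V + (2 * α) • (G * (Aαᵀ)⁻¹ * X)) * (A - G * X + α • 1) := by
        rw [← sub_eq_zero]
        calc _ = (2 * α) • (G * ((Aαᵀ)⁻¹ * Aαᵀ - 1) * X)
              - (2 * α) • (G * (Aαᵀ)⁻¹ * (Aᵀ * X + X * A + Q - X * G * X)) := by
              subst hAα hV
              simp only [mul_add, add_mul, mul_sub, sub_mul, smul_mul_assoc, mul_smul_comm,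
                mul_assoc, mul_one, one_mul, transpose_sub, transpose_smul, transpose_one]
              module
          _ = 0 := by rw [hAT, hCARE, sub_self, mul_zero, zero_mul, mul_zero, smul_zero, sub_zero]
    _ = V * ((1 + (2 * α) • (Aα⁻¹ * G * U⁻¹) * X) * (A - G * X + α • 1)) := by
        rw [← mul_assoc, mul_add V, mul_one V, smul_mul_assoc, mul_smul_comm, ← mul_assoc V,
          hVG]

theorem sub_smul_eq_mul_cayley (hAα : Aα = A - α • 1) (hU : U = Aαᵀ + Q * Aα⁻¹ * G)
    (hAαu : IsUnit Aα) (hUu : IsUnit U)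
    (hCARE : Aᵀ * X + X * A + Q - X * G * X = 0) (hRu : IsUnit (A - G * X - α • 1)) :
    X - (2 * α) • (U⁻¹ * Q * Aα⁻¹) =
      (1 + (2 * α) • U⁻¹) * X * ((A - G * X + α • 1) * (A - G * X - α • 1)⁻¹) := by
  rw [← mul_assoc]
  refine eq_mul_nonsing_inv_of_mul_eq hRu (hUu.mul_left_cancel ?_)
  have hUU : U * U⁻¹ = 1 := mul_nonsing_inv _ ((isUnit_iff_isUnit_det _).mp hUu)
  have hA : Aα⁻¹ * Aα = 1 := nonsing_inv_mul _ ((isUnit_iff_isUnit_det _).mp hAαu)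
  calc U * ((X - (2 * α) • (U⁻¹ * Q * Aα⁻¹)) * (A - G * X - α • 1))
      = U * X * (A - G * X - α • 1) - (2 * α) • (Q * Aα⁻¹ * (A - G * X - α • 1)) := by
        simp only [sub_mul X, mul_sub U, smul_mul_assoc, mul_smul_comm, ← mul_assoc, hUU, one_mul]
    _ = (U + (2 * α) • 1) * X * (A - G * X + α • 1) := by
        rw [← sub_eq_zero]
        calc _ = (2 * α) • (Q * (1 - Aα⁻¹ * Aα))
              - (2 * α) • (Aᵀ * X + X * A + Q - X * G * X) := by
              subst hAα hU
              simp only [mul_add, add_mul, mul_sub, sub_mul, smul_mul_assoc, mul_smul_comm,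
                mul_assoc, mul_one, one_mul, transpose_sub, transpose_smul, transpose_one]
              module
          _ = 0 := by rw [hA, hCARE, sub_self, mul_zero, smul_zero, sub_zero]
    _ = U * ((1 + (2 * α) • U⁻¹) * X * (A - G * X + α • 1)) := by
        rw [← mul_assoc, ← mul_assoc, mul_add U, mul_one U, mul_smul_comm, hUU]

theorem transpose_shift_eq (hU : U = Aαᵀ + Q * Aα⁻¹ * G)
    (hV : V = Aα + G * (Aαᵀ)⁻¹ * Q) (hGt : Gᵀ = G) (hQt : Qᵀ = Q) : Uᵀ = V := by
  rw [hU, hV, transpose_add, transpose_mul, transpose_mul, transpose_transpose,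
    transpose_nonsing_inv, hGt, hQt, mul_assoc]

theorem transpose_one_add_smul_inv (c : K) (hUV : Uᵀ = V) :
    (1 + c • V⁻¹)ᵀ = 1 + c • U⁻¹ := by
  rw [transpose_add, transpose_one, transpose_smul, transpose_nonsing_inv, ← hUV,
    transpose_transpose]

theorem start_eq_cayley {a₀ x₀ y₀ : Matrix l l K} (hAα : Aα = A - α • 1)
    (hU : U = Aαᵀ + Q * Aα⁻¹ * G) (hV : V = Aα + G * (Aαᵀ)⁻¹ * Q)
    (hAαu : IsUnit Aα) (hUu : IsUnit U) (hVu : IsUnit V) (hGt : Gᵀ = G) (hQt : Qᵀ = Q)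
    (hCARE : Aᵀ * X + X * A + Q - X * G * X = 0) (hRu : IsUnit (A - G * X - α • 1))
    (ha₀ : a₀ = 1 + (2 * α) • V⁻¹) (hx₀ : x₀ = (2 * α) • (U⁻¹ * Q * Aα⁻¹))
    (hy₀ : y₀ = (2 * α) • (Aα⁻¹ * G * U⁻¹)) :
    a₀ = (1 + y₀ * X) * ((A - G * X + α • 1) * (A - G * X - α • 1)⁻¹) ∧
      X - x₀ = a₀ᵀ * X * ((A - G * X + α • 1) * (A - G * X - α • 1)⁻¹) := by
  have ha₀t : a₀ᵀ = 1 + (2 * α) • U⁻¹ := by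
    rw [ha₀, transpose_one_add_smul_inv _ (transpose_shift_eq hU hV hGt hQt)]
  rw [ha₀t, ha₀, hy₀, hx₀]
  exact ⟨one_add_smul_inv_eq_mul_cayley hAα hU hV hAαu hUu hVu hCARE hRu,
    sub_smul_eq_mul_cayley hAα hU hAαu hUu hCARE hRu⟩

theorem start_eq_cayley_dual {Y a₀ x₀ y₀ : Matrix l l K} (hAα : Aα = A - α • 1)
    (hU : U = Aαᵀ + Q * Aα⁻¹ * G) (hV : V = Aα + G * (Aαᵀ)⁻¹ * Q)
    (hAαu : IsUnit Aα) (hUu : IsUnit U) (hVu : IsUnit V) (hGt : Gᵀ = G) (hQt : Qᵀ = Q)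
    (hDUAL : A * Y + Y * Aᵀ - Y * Q * Y + G = 0) (hSu : IsUnit (Aᵀ - Q * Y - α • 1))
    (ha₀ : a₀ = 1 + (2 * α) • V⁻¹) (hx₀ : x₀ = (2 * α) • (U⁻¹ * Q * Aα⁻¹))
    (hy₀ : y₀ = (2 * α) • (Aα⁻¹ * G * U⁻¹)) (hx₀t : x₀ᵀ = x₀)
    (hy₀t : y₀ᵀ = y₀) :
    a₀ᵀ = (1 + x₀ * Y) * ((Aᵀ - Q * Y + α • 1) * (Aᵀ - Q * Y - α • 1)⁻¹) ∧
      Y - y₀ = a₀ᵀᵀ * Y * ((Aᵀ - Q * Y + α • 1) * (Aᵀ - Q * Y - α • 1)⁻¹) := by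
  -- The dual equation is the CARE for `(Aᵀ, Q, G)`, whose `U` and `V` are our `V` and `U`.
  have hUV := transpose_shift_eq hU hV hGt hQt
  refine start_eq_cayley (Aα := Aαᵀ) (U := V) (V := U)
    (by rw [hAα, transpose_sub, transpose_smul, transpose_one]) (by rw [hV, transpose_transpose])
    (by rw [hU, transpose_transpose]) ((isUnit_transpose _).mpr hAαu) hVu hUu hQt hGt
    (by rw [transpose_transpose, ← hDUAL]; abel) hSu ?_ ?_ ?_
  · rw [ha₀, transpose_one_add_smul_inv _ hUV]
  · rw [← hy₀t, hy₀, transpose_smul, transpose_mul, transpose_mul, transpose_nonsing_inv,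
      transpose_nonsing_inv, hUV, hGt, mul_assoc]
  · rw [← hx₀t, hx₀, transpose_smul, transpose_mul, transpose_mul, transpose_nonsing_inv,
      transpose_nonsing_inv, hUV, hQt, mul_assoc]

end CommRing

end ADDA

open ADDA

theorem stmt_9_general (n m p : ℕ)
    (A G Q : Matrix (Fin n) (Fin n) ℝ)
    (B : Matrix (Fin n) (Fin m) ℝ) (C : Matrix (Fin p) (Fin n) ℝ)
    (hG : G = B * Bᵀ) (hQ : Q = Cᵀ * C)
    (α : ℝ) (hα : 0 < α)
    (Aα Uα Vα : Matrix (Fin n) (Fin n) ℝ)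
    (hAα : Aα = A - α • 1)
    (hUα : Uα = Aαᵀ + Q * Aα⁻¹ * G)
    (hVα : Vα = Aα + G * (Aαᵀ)⁻¹ * Q)
    (hAαu : IsUnit Aα) (hUαu : IsUnit Uα) (hVαu : IsUnit Vα)
    (X Y : Matrix (Fin n) (Fin n) ℝ)
    (hYpsd : Y.PosSemidef)
    (hCARE : Aᵀ * X + X * A + Q - X * G * X = 0)
    (hDUAL : A * Y + Y * Aᵀ - Y * Q * Y + G = 0)
    (R S : Matrix (Fin n) (Fin n) ℝ)
    (hR : R = A - G * X) (hS : S = Aᵀ - Q * Y)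
    (hRu : IsUnit (R - α • 1)) (hSu : IsUnit (S - α • 1))
    (CR CS : Matrix (Fin n) (Fin n) ℝ)
    (hCR : CR = (R + α • 1) * (R - α • 1)⁻¹)
    (hCS : CS = (S + α • 1) * (S - α • 1)⁻¹)
    (Ahat Xs Ys : ℕ → Matrix (Fin n) (Fin n) ℝ)
    (hA0 : Ahat 0 = 1 + (2 * α) • Vα⁻¹)
    (hX0 : Xs 0 = (2 * α) • (Uα⁻¹ * Q * Aα⁻¹))
    (hY0 : Ys 0 = (2 * α) • (Aα⁻¹ * G * Uα⁻¹))
    (hu1 : ∀ k, IsUnit (1 + Ys k * Xs k))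
    (hu2 : ∀ k, IsUnit (1 + Xs k * Ys k))
    (hArec : ∀ k, Ahat (k + 1) = Ahat k * (1 + Ys k * Xs k)⁻¹ * Ahat k)
    (hXrec : ∀ k, Xs (k + 1) = Xs k + (Ahat k)ᵀ * (1 + Xs k * Ys k)⁻¹ * Xs k * Ahat k)
    (hYrec : ∀ k, Ys (k + 1) = Ys k + Ahat k * Ys k * (1 + Xs k * Ys k)⁻¹ * (Ahat k)ᵀ) :
    (∀ k, ‖Ahat k‖ ≤ (1 + ‖Y‖ * ‖X‖) * ‖CR ^ (2 ^ k)‖) ∧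
      (spectralRadius ℂ (CR.map (algebraMap ℝ ℂ)) < 1 →
        Tendsto (fun k => ‖Ahat k‖) atTop (nhds 0)) := by
  subst hR hS
  have hGpsd : G.PosSemidef := hG ▸ posSemidef_self_mul_conjTranspose B
  have hQpsd : Q.PosSemidef := hQ ▸ posSemidef_conjTranspose_mul_self C
  obtain ⟨hX₀, hY₀⟩ : (Xs 0).PosSemidef ∧ (Ys 0).PosSemidef := by
    obtain ⟨hUQ, hGU⟩ := posSemidef_initial hAαu hGpsd hQpsd
    rw [hX0, hY0, hUα]
    exact ⟨hUQ.smul (by positivity), hGU.smul (by positivity)⟩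
  have hit : IsDoublingIteration Ahat Xs Ys := ⟨hArec, hXrec, hYrec⟩
  have hpsd := hit.posSemidef hX₀ hY₀
  have hXt k : (Xs k)ᵀ = Xs k := (hpsd k).1.isHermitian
  have hYt k : (Ys k)ᵀ = Ys k := (hpsd k).2.isHermitian
  obtain ⟨hstart, hstartX⟩ := start_eq_cayley hAα hUα hVα hAαu hUαu hVαu hGpsd.isHermitian
    hQpsd.isHermitian hCARE hRu hA0 hX0 hY0
  obtain ⟨hstartT, hstartY⟩ := start_eq_cayley_dual hAα hUα hVα hAαu hUαu hVαu
    hGpsd.isHermitian hQpsd.isHermitian hDUAL hSu hA0 hX0 hY0 (hXt 0) (hYt 0)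
  rw [← hCR] at hstart hstartX
  rw [← hCS] at hstartT hstartY
  have hprimal := hit.eq_mul_pow hXt hYt hu1 hstart hstartX
  have hdual := (hit.transpose hXt hYt).eq_mul_pow hYt hXt hu2 hstartT hstartY
  have hYk k : ‖Ys k‖ ≤ ‖Y‖ := (hpsd k).2.l2_opNorm_le <|
    posSemidef_sub_of_eq_mul hYpsd (hpsd k).1 (hYt k) (hdual k).1 (by simpa using (hdual k).2)
  have hbound k : ‖Ahat k‖ ≤ (1 + ‖Y‖ * ‖X‖) * ‖CR ^ 2 ^ k‖ := by
    rw [(hprimal k).1]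
    refine (norm_one_add_mul_mul_le _ _).trans ?_
    gcongr
    exact (l2_opNorm_mul _ _).trans (by gcongr; exact hYk k)
  refine ⟨hbound, fun hρ ↦ squeeze_zero (fun _ ↦ norm_nonneg _) hbound ?_⟩
  simpa using ((tendsto_norm_pow_of_spectralRadius_lt_one hρ).comp
    (tendsto_pow_atTop_atTop_of_one_lt one_lt_two)).const_mul (1 + ‖Y‖ * ‖X‖)

theorem stmt_9 (n m p : ℕ)
    (A G Q : Matrix (Fin n) (Fin n) ℝ)
    (B : Matrix (Fin n) (Fin m) ℝ) (C : Matrix (Fin p) (Fin n) ℝ)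
    (hG : G = B * Bᵀ) (hQ : Q = Cᵀ * C)
    (α : ℝ) (hα : 0 < α)
    (Aα Uα Vα : Matrix (Fin n) (Fin n) ℝ)
    (hAα : Aα = A - α • 1)
    (hUα : Uα = Aαᵀ + Q * Aα⁻¹ * G)
    (hVα : Vα = Aα + G * (Aαᵀ)⁻¹ * Q)
    (hAαu : IsUnit Aα) (hUαu : IsUnit Uα) (hVαu : IsUnit Vα)
    (X Y : Matrix (Fin n) (Fin n) ℝ)
    (hXpsd : X.PosSemidef) (hYpsd : Y.PosSemidef)
    (hCARE : Aᵀ * X + X * A + Q - X * G * X = 0)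
    (hDUAL : A * Y + Y * Aᵀ - Y * Q * Y + G = 0)
    (R S : Matrix (Fin n) (Fin n) ℝ)
    (hR : R = A - G * X) (hS : S = Aᵀ - Q * Y)
    (hRu : IsUnit (R - α • 1)) (hSu : IsUnit (S - α • 1))
    (CR CS : Matrix (Fin n) (Fin n) ℝ)
    (hCR : CR = (R + α • 1) * (R - α • 1)⁻¹)
    (hCS : CS = (S + α • 1) * (S - α • 1)⁻¹)
    (Ahat Xs Ys : ℕ → Matrix (Fin n) (Fin n) ℝ)
    (hA0 : Ahat 0 = 1 + (2 * α) • Vα⁻¹)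
    (hX0 : Xs 0 = (2 * α) • (Uα⁻¹ * Q * Aα⁻¹))
    (hY0 : Ys 0 = (2 * α) • (Aα⁻¹ * G * Uα⁻¹))
    (hu1 : ∀ k, IsUnit (1 + Ys k * Xs k))
    (hu2 : ∀ k, IsUnit (1 + Xs k * Ys k))
    (hArec : ∀ k, Ahat (k + 1) = Ahat k * (1 + Ys k * Xs k)⁻¹ * Ahat k)
    (hXrec : ∀ k, Xs (k + 1) = Xs k + (Ahat k)ᵀ * (1 + Xs k * Ys k)⁻¹ * Xs k * Ahat k)
    (hYrec : ∀ k, Ys (k + 1) = Ys k + Ahat k * Ys k * (1 + Xs k * Ys k)⁻¹ * (Ahat k)ᵀ) :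
    (∀ k, ‖Ahat k‖ ≤ (1 + ‖Y‖ * ‖X‖) * ‖CR ^ (2 ^ k)‖) ∧
      (spectralRadius ℂ (CR.map (algebraMap ℝ ℂ)) < 1 →
        Tendsto (fun k => ‖Ahat k‖) atTop (nhds 0)) :=
  stmt_9_general n m p A G Q B C hG hQ α hα Aα Uα Vα hAα hUα hVα hAαu hUαu hVαu X Y hYpsd hCARE
    hDUAL R S hR hS hRu hSu CR CS hCR hCS Ahat Xs Ys hA0 hX0 hY0 hu1 hu2 hArec hXrec hYrec
end

section
/- Let A ∈ ℝ^{n×n}, B ∈ ℝ^{n×m}, C ∈ ℝ^{p×n}, G = B Bᵀ, Q = Cᵀ C, and α > 0 with A_α := A − αI nonsingular and U_α := A_αᵀ + Q A_α^{-1} G nonsingular. Define D₀ = A_α^{-ᵀ} Cᵀ, P₀ = A_α^{-1} B, Σ₀ = 2α[I_p − (I_p + D₀ᵀ G D₀)^{-1} D₀ᵀ G D₀], and Γ₀ = 2α[I_m − P₀ᵀ Q P₀ (I_m + P₀ᵀ Q P₀)^{-1}] (assuming I_p + D₀ᵀ G D₀ and I_m + P₀ᵀ Q P₀ are nonsingular).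 Then X₀ := 2α U_α^{-1} Q A_α^{-1} = D₀ Σ₀ D₀ᵀ and Y₀ := 2α A_α^{-1} G U_α^{-1} = P₀ Γ₀ P₀ᵀ. -/
open Matrix

lemma push_inv_left {p q : Type*} [Fintype p] [Fintype q] [DecidableEq p] [DecidableEq q]
    (U : Matrix p q ℝ) (V : Matrix q p ℝ)
    (h1 : IsUnit (1 + U * V)) (h2 : IsUnit (1 + V * U)) :
    (1 + U * V)⁻¹ * U = U * (1 + V * U)⁻¹ := by
  have h1d := (Matrix.isUnit_iff_isUnit_det _).mp h1
  have h2d := (Matrix.isUnit_iff_isUnit_det _).mp h2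
  have key : (1 + U * V) * U = U * (1 + V * U) := by
    simp [Matrix.add_mul, Matrix.mul_add, Matrix.mul_assoc]
  calc (1 + U * V)⁻¹ * U
      = (1 + U * V)⁻¹ * (U * (1 + V * U)) * (1 + V * U)⁻¹ := by
        rw [Matrix.mul_assoc ((1 + U * V)⁻¹), Matrix.mul_assoc U,
          Matrix.mul_nonsing_inv _ h2d, Matrix.mul_one]
    _ = (1 + U * V)⁻¹ * ((1 + U * V) * U) * (1 + V * U)⁻¹ := by rw [key]
    _ = U * (1 + V * U)⁻¹ := by
        rw [← Matrix.mul_assoc, Matrix.nonsing_inv_mul _ h1d, Matrix.one_mul]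

lemma push_inv_right {p q : Type*} [Fintype p] [Fintype q] [DecidableEq p] [DecidableEq q]
    (U : Matrix p q ℝ) (V : Matrix q p ℝ)
    (h1 : IsUnit (1 + U * V)) (h2 : IsUnit (1 + V * U)) :
    V * (1 + U * V)⁻¹ = (1 + V * U)⁻¹ * V := by
  have h1d := (Matrix.isUnit_iff_isUnit_det _).mp h1
  have h2d := (Matrix.isUnit_iff_isUnit_det _).mp h2
  have key : V * (1 + U * V) = (1 + V * U) * V := by
    simp [Matrix.add_mul, Matrix.mul_add, Matrix.mul_assoc]
  calc V * (1 + U * V)⁻¹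
      = (1 + V * U)⁻¹ * ((1 + V * U) * V) * (1 + U * V)⁻¹ := by
        rw [← Matrix.mul_assoc, Matrix.nonsing_inv_mul _ h2d, Matrix.one_mul]
    _ = (1 + V * U)⁻¹ * (V * (1 + U * V)) * (1 + U * V)⁻¹ := by rw [key]
    _ = (1 + V * U)⁻¹ * V := by
        rw [Matrix.mul_assoc ((1 + V * U)⁻¹), Matrix.mul_assoc V,
          Matrix.mul_nonsing_inv _ h1d, Matrix.mul_one]

theorem stmt_14 (n m p : ℕ)
    (A G Q : Matrix (Fin n) (Fin n) ℝ)
    (B : Matrix (Fin n) (Fin m) ℝ) (C : Matrix (Fin p) (Fin n) ℝ)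
    (hG : G = B * Bᵀ) (hQ : Q = Cᵀ * C)
    (α : ℝ) (hα : 0 < α)
    (Aα Uα : Matrix (Fin n) (Fin n) ℝ)
    (hAα : Aα = A - α • 1)
    (hUα : Uα = Aαᵀ + Q * Aα⁻¹ * G)
    (hAαu : IsUnit Aα) (hUαu : IsUnit Uα)
    (D0 : Matrix (Fin n) (Fin p) ℝ) (P0 : Matrix (Fin n) (Fin m) ℝ)
    (hD0 : D0 = (Aαᵀ)⁻¹ * Cᵀ) (hP0 : P0 = Aα⁻¹ * B)
    (Sig0 : Matrix (Fin p) (Fin p) ℝ) (Γ0 : Matrix (Fin m) (Fin m) ℝ)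
    (hSig0 : Sig0 = (2 * α) • ((1 : Matrix (Fin p) (Fin p) ℝ) -
        (1 + D0ᵀ * G * D0)⁻¹ * (D0ᵀ * G * D0)))
    (hΓ0 : Γ0 = (2 * α) • ((1 : Matrix (Fin m) (Fin m) ℝ) -
        P0ᵀ * Q * P0 * (1 + P0ᵀ * Q * P0)⁻¹))
    (hu1 : IsUnit ((1 : Matrix (Fin p) (Fin p) ℝ) + D0ᵀ * G * D0))
    (hu2 : IsUnit ((1 : Matrix (Fin m) (Fin m) ℝ) + P0ᵀ * Q * P0)) :
    (2 * α) • (Uα⁻¹ * Q * Aα⁻¹) = D0 * Sig0 * D0ᵀ ∧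
    (2 * α) • (Aα⁻¹ * G * Uα⁻¹) = P0 * Γ0 * P0ᵀ := by
  have hAd := (Matrix.isUnit_iff_isUnit_det _).mp hAαu
  have hUd := (Matrix.isUnit_iff_isUnit_det _).mp hUαu
  have hAtd : IsUnit Aαᵀ.det := by rwa [Matrix.det_transpose]
  -- basic identities
  have hCt : Aαᵀ * D0 = Cᵀ := by
    rw [hD0, ← Matrix.mul_assoc, Matrix.mul_nonsing_inv _ hAtd, Matrix.one_mul]
  have hD0t : D0ᵀ = C * Aα⁻¹ := by
    rw [hD0, Matrix.transpose_mul, Matrix.transpose_nonsing_inv, Matrix.transpose_transpose,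
      Matrix.transpose_transpose]
  have hP0t : P0ᵀ = Bᵀ * (Aαᵀ)⁻¹ := by
    rw [hP0, Matrix.transpose_mul, Matrix.transpose_nonsing_inv]
  have hBt : P0ᵀ * Aαᵀ = Bᵀ := by
    rw [hP0t, Matrix.mul_assoc, Matrix.nonsing_inv_mul _ hAtd, Matrix.mul_one]
  -- factorizations of Uα
  have hfac1 : Uα = Aαᵀ * (1 + D0 * (D0ᵀ * G)) := by
    rw [Matrix.mul_add, Matrix.mul_one, ← Matrix.mul_assoc, hCt, hUα, hQ, hD0t]
    simp only [Matrix.mul_assoc]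
  have hfac2 : Uα = (1 + Q * P0 * P0ᵀ) * Aαᵀ := by
    rw [Matrix.add_mul, Matrix.one_mul, Matrix.mul_assoc (Q * P0), hBt, hUα, hP0, hG]
    simp only [Matrix.mul_assoc]
  -- units
  have hv1 : IsUnit ((1 : Matrix (Fin n) (Fin n) ℝ) + D0 * (D0ᵀ * G)) := by
    rw [Matrix.isUnit_iff_isUnit_det]
    have h : Uα.det = Aαᵀ.det * ((1 : Matrix (Fin n) (Fin n) ℝ) + D0 * (D0ᵀ * G)).det := by
      rw [hfac1, Matrix.det_mul]
    exact isUnit_of_mul_isUnit_right (h ▸ hUd)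
  have hv2 : IsUnit ((1 : Matrix (Fin n) (Fin n) ℝ) + Q * P0 * P0ᵀ) := by
    rw [Matrix.isUnit_iff_isUnit_det]
    have h : Uα.det = ((1 : Matrix (Fin n) (Fin n) ℝ) + Q * P0 * P0ᵀ).det * Aαᵀ.det := by
      rw [hfac2, Matrix.det_mul]
    exact isUnit_of_mul_isUnit_left (h ▸ hUd)
  have h1d := (Matrix.isUnit_iff_isUnit_det _).mp hu1
  have h2d := (Matrix.isUnit_iff_isUnit_det _).mp hu2
  constructor
  · -- X part
    have hUinv : Uα⁻¹ = (1 + D0 * (D0ᵀ * G))⁻¹ * (Aαᵀ)⁻¹ := by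
      rw [hfac1, Matrix.mul_inv_rev]
    have hpush : (1 + D0 * (D0ᵀ * G))⁻¹ * D0 = D0 * (1 + D0ᵀ * G * D0)⁻¹ :=
      push_inv_left D0 (D0ᵀ * G) hv1 hu1
    have hmain : Uα⁻¹ * Q * Aα⁻¹ = D0 * (1 + D0ᵀ * G * D0)⁻¹ * D0ᵀ := by
      rw [hUinv, hQ]
      calc (1 + D0 * (D0ᵀ * G))⁻¹ * (Aαᵀ)⁻¹ * (Cᵀ * C) * Aα⁻¹
          = (1 + D0 * (D0ᵀ * G))⁻¹ * ((Aαᵀ)⁻¹ * Cᵀ) * (C * Aα⁻¹) := by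
            simp only [Matrix.mul_assoc]
        _ = (1 + D0 * (D0ᵀ * G))⁻¹ * D0 * D0ᵀ := by rw [← hD0, ← hD0t]
        _ = D0 * (1 + D0ᵀ * G * D0)⁻¹ * D0ᵀ := by rw [hpush]
    have hSig : Sig0 = (2 * α) • (1 + D0ᵀ * G * D0)⁻¹ := by
      rw [hSig0]
      congr 1
      have h := Matrix.nonsing_inv_mul _ h1d
      rw [Matrix.mul_add, Matrix.mul_one] at h
      rw [sub_eq_iff_eq_add]
      exact h.symm
    rw [hmain, hSig, Matrix.mul_smul, Matrix.smul_mul]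
  · -- Y part
    have hUinv : Uα⁻¹ = (Aαᵀ)⁻¹ * (1 + Q * P0 * P0ᵀ)⁻¹ := by
      rw [hfac2, Matrix.mul_inv_rev]
    have hu2' : IsUnit ((1 : Matrix (Fin m) (Fin m) ℝ) + P0ᵀ * (Q * P0)) := by
      rw [← Matrix.mul_assoc]; exact hu2
    have hpush : P0ᵀ * (1 + Q * P0 * P0ᵀ)⁻¹ = (1 + P0ᵀ * (Q * P0))⁻¹ * P0ᵀ :=
      push_inv_right (Q * P0) P0ᵀ hv2 hu2'
    have hmain : Aα⁻¹ * G * Uα⁻¹ = P0 * (1 + P0ᵀ * Q * P0)⁻¹ * P0ᵀ := by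
      rw [hUinv, hG]
      calc Aα⁻¹ * (B * Bᵀ) * ((Aαᵀ)⁻¹ * (1 + Q * P0 * P0ᵀ)⁻¹)
          = (Aα⁻¹ * B) * ((Bᵀ * (Aαᵀ)⁻¹) * (1 + Q * P0 * P0ᵀ)⁻¹) := by
            simp only [Matrix.mul_assoc]
        _ = P0 * (P0ᵀ * (1 + Q * P0 * P0ᵀ)⁻¹) := by rw [← hP0, ← hP0t]
        _ = P0 * ((1 + P0ᵀ * (Q * P0))⁻¹ * P0ᵀ) := by rw [hpush]
        _ = P0 * (1 + P0ᵀ * Q * P0)⁻¹ * P0ᵀ := by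
            rw [← Matrix.mul_assoc P0 _ P0ᵀ, ← Matrix.mul_assoc P0ᵀ Q P0]
    have hGam : Γ0 = (2 * α) • (1 + P0ᵀ * Q * P0)⁻¹ := by
      rw [hΓ0]
      congr 1
      have h := Matrix.mul_nonsing_inv _ h2d
      rw [Matrix.add_mul, Matrix.one_mul] at h
      rw [sub_eq_iff_eq_add]
      exact h.symm
    rw [hmain, hGam, Matrix.mul_smul, Matrix.smul_mul]
end

section
/- Let Â_k, X_k, Y_k ∈ ℝ^{n×n} with I + X_k Y_k and I + Y_k X_k nonsingular, and set M_k = [[Â_k, 0],[−X_k, I]], L_k = [[I, Y_k],[0, Â_kᵀ]] ∈ ℝ^{2n×2n}. Define M̃ = [[Â_k (I + Y_k X_k)^{-1}, 0],[−Â_kᵀ (I + X_k Y_k)^{-1} X_k, I]] and L̃ = [[I, Â_k Y_k (I + X_k Y_k)^{-1}],[0, Â_kᵀ (I + X_k Y_k)^{-1}]]. Then M̃ L_k = L̃ M_k, and moreover M̃ M_k = [[Â_{k+1}, 0],[−X_{k+1}, I]] and L̃ L_k = [[I, Y_{k+1}],[0, Â_{k+1}ᵀ]], where Â_{k+1} =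 Â_k (I + Y_k X_k)^{-1} Â_k, X_{k+1} = X_k + Â_kᵀ (I + X_k Y_k)^{-1} X_k Â_k, and Y_{k+1} = Y_k + Â_k Y_k (I + X_k Y_k)^{-1} Â_kᵀ. -/
open Matrix

theorem stmt_15 (n : ℕ)
    (Ahat Xk Yk : Matrix (Fin n) (Fin n) ℝ)
    (hXsym : Xk.IsSymm) (hYsym : Yk.IsSymm)
    (hu1 : IsUnit (1 + Xk * Yk)) (hu2 : IsUnit (1 + Yk * Xk))
    (Mk Lk Mt Lt : Matrix (Fin n ⊕ Fin n) (Fin n ⊕ Fin n) ℝ)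
    (hMk : Mk = fromBlocks Ahat 0 (-Xk) 1)
    (hLk : Lk = fromBlocks 1 Yk 0 Ahatᵀ)
    (hMt : Mt = fromBlocks (Ahat * (1 + Yk * Xk)⁻¹) 0
        (-(Ahatᵀ * (1 + Xk * Yk)⁻¹ * Xk)) 1)
    (hLt : Lt = fromBlocks 1 (Ahat * Yk * (1 + Xk * Yk)⁻¹) 0
        (Ahatᵀ * (1 + Xk * Yk)⁻¹)) :
    Mt * Lk = Lt * Mk ∧
    Mt * Mk = fromBlocks (Ahat * (1 + Yk * Xk)⁻¹ * Ahat) 0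
        (-(Xk + Ahatᵀ * (1 + Xk * Yk)⁻¹ * Xk * Ahat)) 1 ∧
    Lt * Lk = fromBlocks 1 (Yk + Ahat * Yk * (1 + Xk * Yk)⁻¹ * Ahatᵀ) 0
        (Ahat * (1 + Yk * Xk)⁻¹ * Ahat)ᵀ := by
  subst hMk hLk hMt hLt
  set U : Matrix (Fin n) (Fin n) ℝ := 1 + Xk * Yk with hU
  set V : Matrix (Fin n) (Fin n) ℝ := 1 + Yk * Xk with hV
  have hUinvU : U⁻¹ * U = 1 := Matrix.nonsing_inv_mul U ((Matrix.isUnit_iff_isUnit_det U).mp hu1)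
  have hUUinv : U * U⁻¹ = 1 := Matrix.mul_nonsing_inv U ((Matrix.isUnit_iff_isUnit_det U).mp hu1)
  have hVinvV : V⁻¹ * V = 1 := Matrix.nonsing_inv_mul V ((Matrix.isUnit_iff_isUnit_det V).mp hu2)
  have hVY : V * Yk = Yk * U := by rw [hU, hV]; noncomm_ring
  -- (1+YX)⁻¹ Y = Y (1+XY)⁻¹
  have hswap : V⁻¹ * Yk = Yk * U⁻¹ := by
    have h : V * (Yk * U⁻¹) = Yk := by
      rw [← Matrix.mul_assoc, hVY, Matrix.mul_assoc, hUUinv, Matrix.mul_one]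
    calc V⁻¹ * Yk = V⁻¹ * (V * (Yk * U⁻¹)) := by rw [h]
      _ = Yk * U⁻¹ := by rw [← Matrix.mul_assoc, hVinvV, Matrix.one_mul]
  -- V⁻¹ = 1 - Y U⁻¹ X
  have hVinv : V⁻¹ = 1 - Yk * U⁻¹ * Xk := by
    apply Matrix.inv_eq_right_inv
    have h1 : V * (1 - Yk * U⁻¹ * Xk) = V - (V * Yk) * (U⁻¹ * Xk) := by
      rw [Matrix.mul_sub, Matrix.mul_one]; noncomm_ring
    rw [h1, hVY]
    have h2 : Yk * U * (U⁻¹ * Xk) = Yk * Xk := by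
      rw [Matrix.mul_assoc, ← Matrix.mul_assoc U, hUUinv, Matrix.one_mul]
    rw [h2, hV]; noncomm_ring
  -- Aᵀ - Aᵀ U⁻¹ (X Y) = Aᵀ U⁻¹
  have hAt : Ahatᵀ - Ahatᵀ * U⁻¹ * (Xk * Yk) = Ahatᵀ * U⁻¹ := by
    have h2 : U⁻¹ + U⁻¹ * (Xk * Yk) = 1 := by
      have h := hUinvU
      rw [hU, Matrix.mul_add, Matrix.mul_one] at h
      exact h
    have h3 : (U⁻¹ : Matrix (Fin n) (Fin n) ℝ) = 1 - U⁻¹ * (Xk * Yk) := by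
      rw [← h2]; noncomm_ring
    calc Ahatᵀ - Ahatᵀ * U⁻¹ * (Xk * Yk) = Ahatᵀ * (1 - U⁻¹ * (Xk * Yk)) := by noncomm_ring
      _ = Ahatᵀ * U⁻¹ := by rw [← h3]
  -- transpose of V⁻¹
  have hVt : (V⁻¹)ᵀ = U⁻¹ := by
    rw [Matrix.transpose_nonsing_inv]
    congr 1
    rw [hU, hV, Matrix.transpose_add, Matrix.transpose_one, Matrix.transpose_mul,
      hXsym.eq, hYsym.eq]
  refine ⟨?_, ?_, ?_⟩
  all_goals rw [Matrix.fromBlocks_multiply]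
  · rw [Matrix.fromBlocks_multiply]
    refine Matrix.fromBlocks_inj.mpr ⟨?_, ?_, ?_, ?_⟩ <;>
      simp only [Matrix.one_mul, Matrix.mul_one, Matrix.zero_mul, Matrix.mul_zero,
        add_zero, zero_add, Matrix.mul_neg, Matrix.neg_mul]
    · rw [hVinv]; noncomm_ring
    · rw [Matrix.mul_assoc, hswap, Matrix.mul_assoc]
    · conv_rhs => rw [← hAt]
      noncomm_ring
  · refine Matrix.fromBlocks_inj.mpr ⟨?_, ?_, ?_, ?_⟩ <;>
      simp only [Matrix.one_mul, Matrix.mul_one, Matrix.zero_mul, Matrix.mul_zero,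
        add_zero, zero_add, Matrix.mul_neg, Matrix.neg_mul] <;> noncomm_ring
  · refine Matrix.fromBlocks_inj.mpr ⟨?_, ?_, ?_, ?_⟩ <;>
      simp only [Matrix.one_mul, Matrix.mul_one, Matrix.zero_mul, Matrix.mul_zero,
        add_zero, zero_add, Matrix.mul_neg, Matrix.neg_mul]
    rw [Matrix.transpose_mul, Matrix.transpose_mul, hVt, Matrix.mul_assoc]
end

section
/- Let U, V ∈ ℝ^{n×n} be symmetric positive semidefinite matrices. Then I + U V is nonsingular, and both V (I + U V)^{-1} and (I + U V)^{-1} U are symmetric positive semidefinite. -/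
/-!
Write `U = Bᴴ B`. By Sylvester's determinant identity `det (1 + U V) = det (1 + B V Bᴴ)`, and
`1 + B V Bᴴ` is positive definite, so `A = 1 + U V` is invertible. Since `Aᴴ V = V + V U V` is
positive semidefinite, so is its congruence `V A⁻¹ = A⁻¹ᴴ (Aᴴ V) A⁻¹`. Finally `A⁻¹ U` is the
conjugate transpose of `U (1 + V U)⁻¹`, the previous case with `U` and `V` exchanged.
-/

open Matrix

namespace Matrix

open scoped ComplexOrder MatrixOrder

variable {𝕜 n : Type*} [RCLike 𝕜] [Fintype n] [DecidableEq n] {U V : Matrix n n 𝕜}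

theorem PosSemidef.isUnit_one_add_mul (hU : U.PosSemidef) (hV : V.PosSemidef) :
    IsUnit (1 + U * V) := by
  obtain ⟨B, rfl⟩ := CStarAlgebra.nonneg_iff_eq_star_mul_self.mp hU.nonneg
  have hpd : (1 + B * V * Bᴴ).PosDef := PosDef.one.add_posSemidef (hV.mul_mul_conjTranspose_same B)
  rw [isUnit_iff_isUnit_det, star_eq_conjTranspose, mul_assoc, det_one_add_mul_comm]
  exact hpd.det_pos.ne'.isUnit

theorem PosSemidef.mul_inv_one_add_mul_s17 (hU : U.PosSemidef) (hV : V.PosSemidef) :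
    (V * (1 + U * V)⁻¹).PosSemidef := by
  set A := 1 + U * V
  have hAdet : IsUnit A.det := (isUnit_iff_isUnit_det A).mp (hU.isUnit_one_add_mul hV)
  have hAV : Aᴴ * V = V + Vᴴ * U * V := by
    simp only [A, conjTranspose_add, conjTranspose_one, conjTranspose_mul, hU.isHermitian.eq,
      hV.isHermitian.eq]
    noncomm_ring
  have hcongr : V * A⁻¹ = A⁻¹ᴴ * (Aᴴ * V) * A⁻¹ := by
    rw [conjTranspose_nonsing_inv, ← mul_assoc, nonsing_inv_mul _ (by simpa using hAdet), one_mul]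
  rw [hcongr, hAV]
  exact (hV.add (hU.conjTranspose_mul_mul_same V)).conjTranspose_mul_mul_same _

theorem PosSemidef.inv_one_add_mul_mul_s17 (hU : U.PosSemidef) (hV : V.PosSemidef) :
    ((1 + U * V)⁻¹ * U).PosSemidef := by
  have hadj : ((1 + U * V)⁻¹ * U)ᴴ = U * (1 + V * U)⁻¹ := by
    rw [conjTranspose_mul, conjTranspose_nonsing_inv, conjTranspose_add, conjTranspose_one,
      conjTranspose_mul, hU.isHermitian.eq, hV.isHermitian.eq]
  rw [← posSemidef_conjTranspose_iff, hadj]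
  exact hV.mul_inv_one_add_mul_s17 hU

end Matrix

theorem stmt_17 (n : ℕ)
    (U V : Matrix (Fin n) (Fin n) ℝ)
    (hU : U.PosSemidef) (hV : V.PosSemidef) :
    IsUnit (1 + U * V) ∧ (V * (1 + U * V)⁻¹).PosSemidef ∧
      ((1 + U * V)⁻¹ * U).PosSemidef :=
  ⟨hU.isUnit_one_add_mul hV, hU.mul_inv_one_add_mul_s17 hV, hU.inv_one_add_mul_mul_s17 hV⟩
end
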